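/- arXiv:2001.09338 — 14 statements merged into one kernel-verified Lean document; each statement's English description precedes it below -/
import Mathlib

section
/- If A and B are invertible bounded operators on a Hilbert space, then Δ_{B,A}^m(X) = 0 if and only if Δ_{B^{-1},A^{-1}}^m(X) = 0. -/
lemma conj_cancel {M : Type*} [Monoid M] (a a' b b' w : M)
    (ha : a * a' = 1) (hb' : b' * b = 1) (m : ℕ) :
    b' ^ (m + 1) * (b * w * a) * a' ^ (m + 1) = b' ^ m * w * a' ^ m := by
  have h1 : b' ^ (m + 1) * (b * w * a) * a' ^ (m + 1)
      = b' ^ m * ((b' * b) * (w * ((a * a') * a' ^ m))) := by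
    rw [pow_succ b' m, pow_succ' a' m]; simp [mul_assoc]
  rw [h1, hb', ha, one_mul, one_mul, mul_assoc]

lemma delta_key {H : Type*} [NormedAddCommGroup H] [InnerProductSpace ℂ H] [CompleteSpace H]
    (A B A' B' X : H →L[ℂ] H) (hA : A * A' = 1) (hB' : B' * B = 1) (m : ℕ) :
    (fun Y : H →L[ℂ] H => B' * Y * A' - Y)^[m] X
      = ((-1 : ℂ) ^ m) • (B' ^ m * ((fun Y : H →L[ℂ] H => B * Y * A - Y)^[m] X) * A' ^ m) := by
  induction m with
  | zero => simp
  | succ m ih =>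
    rw [Function.iterate_succ_apply', Function.iterate_succ_apply', ih]
    set W := (fun Y : H →L[ℂ] H => B * Y * A - Y)^[m] X with hW
    have hc := conj_cancel A A' B B' W hA hB' m
    simp only [mul_sub, sub_mul, mul_smul_comm, smul_mul_assoc, smul_sub, pow_succ (-1 : ℂ)]
    rw [hc]
    have h2 : B' * (B' ^ m * W * A' ^ m) * A' = B' ^ (m + 1) * W * A' ^ (m + 1) := by
      rw [pow_succ' B' m, pow_succ A' m]; simp [mul_assoc]
    rw [h2]
    simp [smul_sub, sub_sub_eq_add_sub, mul_neg, neg_smul]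
    abel

/-- For invertible `A, B`: `Δ_{B,A}^m(X) = 0 ↔ Δ_{B⁻¹,A⁻¹}^m(X) = 0`. -/
theorem stmt_2 {H : Type*} [NormedAddCommGroup H] [InnerProductSpace ℂ H] [CompleteSpace H]
    (A B A' B' X : H →L[ℂ] H) (m : ℕ)
    (hA : A * A' = 1) (hA' : A' * A = 1) (hB : B * B' = 1) (hB' : B' * B = 1) :
    (fun Y : H →L[ℂ] H => B * Y * A - Y)^[m] X = 0 ↔
      (fun Y : H →L[ℂ] H => B' * Y * A' - Y)^[m] X = 0 := by
  constructor
  · intro h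
    rw [delta_key A B A' B' X hA hB' m, h]
    simp
  · intro h
    rw [delta_key A' B' A B X hA' hB m, h]
    simp
end

section
/- If A and B are invertible bounded operators on a Hilbert space, then δ_{B,A}^m(X) = 0 if and only if δ_{B^{-1},A^{-1}}^m(X) = 0. -/
private lemma key_dir {R : Type*} [Ring R] (A B A' B' X : R)
    (hA : A * A' = 1) (hB' : B' * B = 1) (m : ℕ)
    (h : (fun Y : R => B * Y - Y * A)^[m] X = 0) :
    (fun Y : R => B' * Y - Y * A')^[m] X = 0 := by
  set T : R → R := fun Y => -(B' * Y * A') with hT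
  have h1 : ∀ Y : R, B' * Y - Y * A' = T (B * Y - Y * A) := by
    intro Y
    have : B' * (B * Y - Y * A) * A' = Y * A' - B' * Y := by
      rw [mul_sub, sub_mul, ← mul_assoc B' B Y, hB', one_mul,
        mul_assoc B' (Y * A) A', mul_assoc Y A A', hA, mul_one]
    simp only [hT, this, neg_sub]
  have h2 : ∀ Y : R, B' * (T Y) - (T Y) * A' = T (B' * Y - Y * A') := by
    intro Y; simp only [hT]; noncomm_ring
  have hcomm : ∀ n (Z : R), B' * (T^[n] Z) - (T^[n] Z) * A' = T^[n] (B' * Z - Z * A') := by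
    intro n
    induction n with
    | zero => intro Z; simp
    | succ n ih =>
      intro Z
      rw [Function.iterate_succ_apply', Function.iterate_succ_apply', h2, ih]
  have main : ∀ n, (fun Y : R => B' * Y - Y * A')^[n] X
      = T^[n] ((fun Y : R => B * Y - Y * A)^[n] X) := by
    intro n
    induction n with
    | zero => simp
    | succ n ih =>
      rw [Function.iterate_succ_apply', ih]
      rw [hcomm, h1, ← Function.iterate_succ_apply T,
        ← Function.iterate_succ_apply' (fun Y : R => B * Y - Y * A)]
  rw [main, h]
  have hT0 : T 0 = 0 := by simp [hT]
  exact Function.iterate_fixed hT0 m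

/-- For invertible `A, B`: `δ_{B,A}^m(X) = 0 ↔ δ_{B⁻¹,A⁻¹}^m(X) = 0`. -/
theorem stmt_3 {H : Type*} [NormedAddCommGroup H] [InnerProductSpace ℂ H] [CompleteSpace H]
    (A B A' B' X : H →L[ℂ] H) (m : ℕ)
    (hA : A * A' = 1) (hA' : A' * A = 1) (hB : B * B' = 1) (hB' : B' * B = 1) :
    (fun Y : H →L[ℂ] H => B * Y - Y * A)^[m] X = 0 ↔
      (fun Y : H →L[ℂ] H => B' * Y - Y * A')^[m] X = 0 := by
  constructor
  · exact key_dir A B A' B' X hA hB' m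
  · exact key_dir A' B' A B X hA' hB m
end

section
/- Suppose A, B, X, Y are bounded operators on a complex Hilbert space with AB = BA, XY = YX, A*Y = YA*, B*X = XB*. If A is (X,m)-selfadjoint (δ_{A*,A}^m(X) = 0) and B is (Y,n)-selfadjoint (δ_{B*,B}^n(Y) = 0), then AB is (XY, m+n-1)-selfadjoint, i.e. δ_{(AB)*, AB}^{m+n-1}(XY) = 0. -/
set_option maxHeartbeats 1000000

section Aux

variable {A : Type*} [Ring A] [Algebra ℂ A]

private lemma iter_eq_pow (C D : A) (k : ℕ) (Z : A) :
    (fun Z => C * Z - Z * D)^[k] Z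
      = ((LinearMap.mulLeft ℂ C - LinearMap.mulRight ℂ D) ^ k) Z := by
  induction k generalizing Z with
  | zero => simp
  | succ k ih =>
    rw [Function.iterate_succ_apply', ih, pow_succ']
    simp [Module.End.mul_apply, LinearMap.sub_apply]

private lemma commute_LL {C D : A} (h : C * D = D * C) :
    Commute (LinearMap.mulLeft ℂ C) (LinearMap.mulLeft ℂ D) :=
  LinearMap.ext fun Z => by
    simp only [Module.End.mul_apply, LinearMap.mulLeft_apply, ← mul_assoc, h]

private lemma commute_RR {C D : A} (h : C * D = D * C) :
    Commute (LinearMap.mulRight ℂ C) (LinearMap.mulRight ℂ D) :=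
  LinearMap.ext fun Z => by
    simp only [Module.End.mul_apply, LinearMap.mulRight_apply, mul_assoc, h]

private lemma commute_LR (C D : A) :
    Commute (LinearMap.mulLeft ℂ C) (LinearMap.mulRight ℂ D) :=
  LinearMap.ext fun Z => by
    simp only [Module.End.mul_apply, LinearMap.mulLeft_apply, LinearMap.mulRight_apply,
      mul_assoc]

end Aux

open ContinuousLinearMap in
/-- Commuting hypotheses, `A` `(X,m)`-selfadjoint and `B` `(Y,n)`-selfadjoint imply
`AB` is `(XY, m+n-1)`-selfadjoint. -/
theorem stmt_4 {H : Type*} [NormedAddCommGroup H] [InnerProductSpace ℂ H] [CompleteSpace H]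
    (A B X Y : H →L[ℂ] H) (m n : ℕ) (hm : 1 ≤ m) (hn : 1 ≤ n)
    (hAB : A * B = B * A) (hXY : X * Y = Y * X)
    (hAY : adjoint A * Y = Y * adjoint A) (hBX : adjoint B * X = X * adjoint B)
    (hA : (fun Z : H →L[ℂ] H => adjoint A * Z - Z * A)^[m] X = 0)
    (hB : (fun Z : H →L[ℂ] H => adjoint B * Z - Z * B)^[n] Y = 0) :
    (fun Z : H →L[ℂ] H => adjoint (A * B) * Z - Z * (A * B))^[m + n - 1] (X * Y) = 0 := by
  rw [iter_eq_pow] at hA hB ⊢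
  set dA := LinearMap.mulLeft ℂ (adjoint A) - LinearMap.mulRight ℂ A with hdA
  set dB := LinearMap.mulLeft ℂ (adjoint B) - LinearMap.mulRight ℂ B with hdB
  set a := LinearMap.mulLeft ℂ (adjoint B) * dA with ha
  set b := LinearMap.mulRight ℂ A * dB with hb
  -- adjoints commute
  have hadjmul : adjoint (A * B) = adjoint B * adjoint A := by
    rw [ContinuousLinearMap.mul_def, ContinuousLinearMap.adjoint_comp,
      ContinuousLinearMap.mul_def]
  have hadjmul' : adjoint (B * A) = adjoint A * adjoint B := by
    rw [ContinuousLinearMap.mul_def, ContinuousLinearMap.adjoint_comp,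
      ContinuousLinearMap.mul_def]
  have hadjcomm : adjoint A * adjoint B = adjoint B * adjoint A := by
    rw [← hadjmul, ← hadjmul', hAB]
  -- decomposition
  have hdec : LinearMap.mulLeft ℂ (adjoint (A * B)) - LinearMap.mulRight ℂ (A * B)
      = a + b := by
    ext Z
    simp only [ha, hb, hdA, hdB, LinearMap.sub_apply, LinearMap.add_apply,
      Module.End.mul_apply, LinearMap.mulLeft_apply, LinearMap.mulRight_apply]
    rw [hadjmul]
    rw [show Z * (A * B) = Z * (B * A) by rw [hAB]]
    noncomm_ring
  -- commutation facts
  have cAB : Commute dA dB := by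
    rw [hdA, hdB]
    exact ((commute_LL hadjcomm).sub_right (commute_LR _ _)).sub_left
      (((commute_LR _ _).symm).sub_right (commute_RR hAB))
  have cdARA : Commute dA (LinearMap.mulRight ℂ A) := by
    rw [hdA]
    exact (commute_LR _ _).sub_left (Commute.refl _)
  have cLBdA : Commute (LinearMap.mulLeft ℂ (adjoint B)) dA := by
    rw [hdA]
    exact (commute_LL hadjcomm.symm).sub_right (commute_LR _ _)
  have cRAdB : Commute (LinearMap.mulRight ℂ A) dB := by
    rw [hdB]
    exact ((commute_LR _ _).symm).sub_right (commute_RR hAB)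
  have cLYdA : Commute (LinearMap.mulLeft ℂ Y) dA := by
    rw [hdA]
    exact (commute_LL hAY.symm).sub_right (commute_LR _ _)
  have cLXdB : Commute (LinearMap.mulLeft ℂ X) dB := by
    rw [hdB]
    exact (commute_LL hBX.symm).sub_right (commute_LR _ _)
  have cLBdB : Commute (LinearMap.mulLeft ℂ (adjoint B)) dB := by
    rw [hdB]
    exact (Commute.refl _).sub_right (commute_LR _ _)
  have cab : Commute a b := by
    rw [ha, hb]
    exact ((commute_LR _ _).mul_right cLBdB).mul_left (cdARA.mul_right cAB)
  rw [hdec, cab.add_pow, LinearMap.sum_apply]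
  apply Finset.sum_eq_zero
  intro k hk
  simp only [Finset.mem_range] at hk
  set j := m + n - 1 - k with hj
  have hkj : k + j = m + n - 1 := by omega
  -- reduce to the key vanishing
  have key : (dA ^ k) ((dB ^ j) (X * Y)) = 0 := by
    by_cases hkm : m ≤ k
    · -- use hA
      have swap := LinearMap.congr_fun ((cAB.pow_pow k j)) (X * Y)
      simp only [Module.End.mul_apply] at swap
      rw [swap]
      have h1 : (dA ^ k) ((LinearMap.mulLeft ℂ Y) X)
          = (LinearMap.mulLeft ℂ Y) ((dA ^ k) X) := by
        have := LinearMap.congr_fun (cLYdA.pow_right k) X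
        simp only [Module.End.mul_apply] at this
        exact this.symm
      simp only [LinearMap.mulLeft_apply] at h1
      rw [hXY, h1]
      rw [← Nat.sub_add_cancel hkm, pow_add, Module.End.mul_apply, hA, map_zero,
        mul_zero, map_zero]
    · -- use hB
      have hjn : n ≤ j := by omega
      have h1 : (dB ^ j) ((LinearMap.mulLeft ℂ X) Y)
          = (LinearMap.mulLeft ℂ X) ((dB ^ j) Y) := by
        have := LinearMap.congr_fun (cLXdB.pow_right j) Y
        simp only [Module.End.mul_apply] at this
        exact this.symm
      simp only [LinearMap.mulLeft_apply] at h1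
      rw [h1]
      rw [← Nat.sub_add_cancel hjn, pow_add, Module.End.mul_apply, hB, map_zero,
        mul_zero, map_zero]
  -- finish
  rw [cLBdA.mul_pow, cRAdB.mul_pow]
  simp only [Module.End.mul_apply, Module.End.natCast_apply]
  have swap2 := LinearMap.congr_fun (cdARA.pow_pow k j) ((dB ^ j) ((m + n - 1).choose k • (X * Y)))
  simp only [Module.End.mul_apply] at swap2
  rw [swap2]
  have : (dB ^ j) ((m + n - 1).choose k • (X * Y)) = (m + n - 1).choose k • (dB ^ j) (X * Y) :=
    map_nsmul _ _ _
  rw [this]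
  rw [map_nsmul, key, smul_zero, map_zero]
  exact map_zero _
end

section
/- Suppose A, B, X, Y are bounded operators on a complex Hilbert space with AB = BA, XY = YX, A*Y = YA*, B*X = XB*. If δ_{A*,A}^m(X) = 0 and δ_{B*,B}^n(Y) = 0, then δ_{A*+B*, A+B}^{m+n-1}(XY) = 0, i.e. A+B is (XY, m+n-1)-selfadjoint. -/
open ContinuousLinearMap in
/-- Commuting hypotheses, `δ_{A*,A}^m(X) = 0` and `δ_{B*,B}^n(Y) = 0` imply
`δ_{A*+B*, A+B}^{m+n-1}(XY) = 0`. -/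
theorem stmt_5 {H : Type*} [NormedAddCommGroup H] [InnerProductSpace ℂ H] [CompleteSpace H]
    (A B X Y : H →L[ℂ] H) (m n : ℕ) (hm : 1 ≤ m) (hn : 1 ≤ n)
    (hAB : A * B = B * A) (hXY : X * Y = Y * X)
    (hAY : adjoint A * Y = Y * adjoint A) (hBX : adjoint B * X = X * adjoint B)
    (hA : (fun Z : H →L[ℂ] H => adjoint A * Z - Z * A)^[m] X = 0)
    (hB : (fun Z : H →L[ℂ] H => adjoint B * Z - Z * B)^[n] Y = 0) :
    (fun Z : H →L[ℂ] H => (adjoint A + adjoint B) * Z - Z * (A + B))^[m + n - 1] (X * Y) = 0 := by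
  set dA : (H →L[ℂ] H) →ₗ[ℂ] (H →L[ℂ] H) :=
    LinearMap.mulLeft ℂ (adjoint A) - LinearMap.mulRight ℂ A with hdA
  set dB : (H →L[ℂ] H) →ₗ[ℂ] (H →L[ℂ] H) :=
    LinearMap.mulLeft ℂ (adjoint B) - LinearMap.mulRight ℂ B with hdB
  have dA_apply : ∀ Z : H →L[ℂ] H, dA Z = adjoint A * Z - Z * A := fun Z => rfl
  have dB_apply : ∀ Z : H →L[ℂ] H, dB Z = adjoint B * Z - Z * B := fun Z => rfl
  -- adjoints commute
  have hAB' : adjoint A * adjoint B = adjoint B * adjoint A := by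
    rw [← star_eq_adjoint, ← star_eq_adjoint, ← star_mul, ← star_mul, hAB]
  -- dA and dB commute
  have commAB : Commute dA dB := by
    show dA * dB = dB * dA
    apply LinearMap.ext
    intro Z
    simp only [Module.End.mul_apply, dA_apply, dB_apply, mul_sub, sub_mul, mul_assoc]
    rw [hAB, ← mul_assoc, hAB', mul_assoc]
    abel
  -- iterate vs pow for dA
  have hAfun : (fun Z : H →L[ℂ] H => adjoint A * Z - Z * A) = ⇑dA :=
    funext fun Z => (dA_apply Z).symm
  have hBfun : (fun Z : H →L[ℂ] H => adjoint B * Z - Z * B) = ⇑dB :=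
    funext fun Z => (dB_apply Z).symm
  have hAm : (dA ^ m) X = 0 := by
    rw [Module.End.pow_apply, ← hAfun, hA]
  have hBn : (dB ^ n) Y = 0 := by
    rw [Module.End.pow_apply, ← hBfun, hB]
  have hAk : ∀ k, m ≤ k → (dA ^ k) X = 0 := by
    intro k hk
    have : dA ^ k = dA ^ (k - m) * dA ^ m := by
      rw [← pow_add]; congr 1; omega
    rw [this, Module.End.mul_apply, hAm, map_zero]
  have hBk : ∀ k, n ≤ k → (dB ^ k) Y = 0 := by
    intro k hk
    have : dB ^ k = dB ^ (k - n) * dB ^ n := by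
      rw [← pow_add]; congr 1; omega
    rw [this, Module.End.mul_apply, hBn, map_zero]
  -- pull Y out of dA iterates
  have pullA1 : ∀ Z : H →L[ℂ] H, dA (Y * Z) = Y * dA Z := by
    intro Z
    rw [dA_apply, dA_apply, ← mul_assoc, hAY, mul_sub, mul_assoc, mul_assoc]
  have pullA : ∀ (j : ℕ) (Z : H →L[ℂ] H), (dA ^ j) (Y * Z) = Y * (dA ^ j) Z := by
    intro j
    induction j with
    | zero => intro Z; simp
    | succ j ih =>
      intro Z
      rw [pow_succ', Module.End.mul_apply, Module.End.mul_apply, ih, pullA1]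
  have pullB1 : ∀ Z : H →L[ℂ] H, dB (X * Z) = X * dB Z := by
    intro Z
    rw [dB_apply, dB_apply, ← mul_assoc, hBX, mul_sub, mul_assoc, mul_assoc]
  have pullB : ∀ (j : ℕ) (Z : H →L[ℂ] H), (dB ^ j) (X * Z) = X * (dB ^ j) Z := by
    intro j
    induction j with
    | zero => intro Z; simp
    | succ j ih =>
      intro Z
      rw [pow_succ', Module.End.mul_apply, Module.End.mul_apply, ih, pullB1]
  -- rewrite the goal
  have hSum : (fun Z : H →L[ℂ] H => (adjoint A + adjoint B) * Z - Z * (A + B))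
      = ⇑(dA + dB) := by
    funext Z
    simp only [LinearMap.add_apply, dA_apply, dB_apply, add_mul, mul_add]
    abel
  rw [hSum, ← Module.End.pow_apply, commAB.add_pow, LinearMap.coe_sum,
    Finset.sum_apply]
  apply Finset.sum_eq_zero
  intro k hk
  have hkle : k ≤ m + n - 1 := Nat.lt_succ_iff.mp (Finset.mem_range.mp hk)
  simp only [Module.End.mul_apply, Module.End.natCast_apply, map_nsmul]
  by_cases hjn : n ≤ m + n - 1 - k
  · rw [pullB _ Y, hBk _ hjn, mul_zero, map_zero, smul_zero]
  · have hmk : m ≤ k := by omega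
    rw [← Module.End.mul_apply (dA ^ k), (commAB.pow_pow k (m + n - 1 - k)).eq,
      Module.End.mul_apply, hXY, pullA _ X, hAk _ hmk, mul_zero, map_zero, smul_zero]
end

section
/- If A is (X,m)-selfadjoint (δ_{A*,A}^m(X) = 0) and N is a q-nilpotent operator commuting with A (i.e., AN = NA and N^q = 0), then δ_{A*, A+N}^{m+q-1}(X) = 0. -/
open ContinuousLinearMap in
/-- If `A` is `(X,m)`-selfadjoint and `N` is `q`-nilpotent commuting with `A`, then
`δ_{A*, A+N}^{m+q-1}(X) = 0`. -/
theorem stmt_6 {H : Type*} [NormedAddCommGroup H] [InnerProductSpace ℂ H] [CompleteSpace H]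
    (A N X : H →L[ℂ] H) (m q : ℕ) (hm : 1 ≤ m) (hq : 1 ≤ q)
    (hAN : A * N = N * A) (hN : N ^ q = 0)
    (hA : (fun Z : H →L[ℂ] H => adjoint A * Z - Z * A)^[m] X = 0) :
    (fun Z : H →L[ℂ] H => adjoint A * Z - Z * (A + N))^[m + q - 1] X = 0 := by
  set n := m + q - 1 with hn
  set d : Module.End ℂ (H →L[ℂ] H) :=
    LinearMap.mulLeft ℂ (adjoint A) - LinearMap.mulRight ℂ A with hd
  set y : Module.End ℂ (H →L[ℂ] H) := - LinearMap.mulRight ℂ N with hy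
  have hAN' : Commute (LinearMap.mulRight ℂ A) (LinearMap.mulRight ℂ N) := by
    unfold Commute SemiconjBy
    ext Z
    simp only [Module.End.mul_apply, LinearMap.mulRight_apply, mul_assoc, hAN]
  have hdy : Commute d y := by
    rw [hd, hy]
    exact Commute.neg_right (Commute.sub_left (LinearMap.commute_mulLeft_right (ContinuousLinearMap.adjoint A) N) hAN')
  have hdfun : ⇑d = fun Z : H →L[ℂ] H => adjoint A * Z - Z * A := by
    funext Z; simp [hd]
  have hdm : (d ^ m) X = 0 := by
    rw [Module.End.pow_apply, hdfun]; exact hA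
  have hdk : ∀ k, m ≤ k → (d ^ k) X = 0 := by
    intro k hk
    obtain ⟨j, rfl⟩ := Nat.exists_eq_add_of_le hk
    rw [add_comm, pow_add, Module.End.mul_apply, hdm, map_zero]
  have hyq : y ^ q = 0 := by
    rw [hy]
    have h0 : (LinearMap.mulRight ℂ N : Module.End ℂ (H →L[ℂ] H)) ^ q = 0 := by
      rw [LinearMap.pow_mulRight, hN]
      ext Z
      simp
    calc (-LinearMap.mulRight ℂ N : Module.End ℂ (H →L[ℂ] H)) ^ q
        = (-1 : Module.End ℂ (H →L[ℂ] H)) ^ q * LinearMap.mulRight ℂ N ^ q := by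
          rw [← (Commute.neg_one_left (LinearMap.mulRight ℂ N : Module.End ℂ (H →L[ℂ] H))).mul_pow,
            neg_one_mul]
      _ = 0 := by rw [h0, mul_zero]
  have hfun : (fun Z : H →L[ℂ] H => adjoint A * Z - Z * (A + N)) = ⇑(d + y) := by
    funext Z
    simp only [hd, hy, LinearMap.add_apply, LinearMap.sub_apply, LinearMap.neg_apply,
      LinearMap.mulLeft_apply, LinearMap.mulRight_apply, mul_add]
    abel
  rw [hfun, ← Module.End.pow_apply, hdy.add_pow, LinearMap.sum_apply]
  apply Finset.sum_eq_zero
  intro k hk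
  rw [Finset.mem_range] at hk
  by_cases hqk : q ≤ n - k
  · have : y ^ (n - k) = 0 := pow_eq_zero_of_le hqk hyq
    rw [this]
    simp
  · have hmk : m ≤ k := by omega
    rw [(hdy.pow_pow k (n - k)).eq]
    simp only [Module.End.mul_apply, Module.End.natCast_apply, map_nsmul, hdk k hmk,
      smul_zero, map_zero]
end

section
/- If A is m-selfadjoint (δ_{A*,A}^m(I) = 0) and N is a q-nilpotent operator commuting with A, then A + N is (m+2q-2)-selfadjoint, i.e. δ_{(A+N)*, A+N}^{m+2q-2}(I) = 0. -/
set_option maxHeartbeats 1000000 in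
open ContinuousLinearMap in
/-- If `A` is `m`-selfadjoint and `N` is `q`-nilpotent commuting with `A`, then
`A + N` is `(m+2q-2)`-selfadjoint. -/
theorem stmt_7 {H : Type*} [NormedAddCommGroup H] [InnerProductSpace ℂ H] [CompleteSpace H]
    (A N : H →L[ℂ] H) (m q : ℕ) (hm : 1 ≤ m) (hq : 1 ≤ q)
    (hAN : A * N = N * A) (hN : N ^ q = 0)
    (hA : (fun Z : H →L[ℂ] H => adjoint A * Z - Z * A)^[m] 1 = 0) :
    (fun Z : H →L[ℂ] H => adjoint (A + N) * Z - Z * (A + N))^[m + 2 * q - 2] 1 = 0 := by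
  classical
  set f : Module.End ℂ (H →L[ℂ] H) :=
    LinearMap.mulLeft ℂ (adjoint A) - LinearMap.mulRight ℂ A with hf
  set g : Module.End ℂ (H →L[ℂ] H) :=
    LinearMap.mulLeft ℂ (adjoint N) - LinearMap.mulRight ℂ N with hg
  -- adjoints commute
  have hadj : adjoint A * adjoint N = adjoint N * adjoint A := by
    rw [← star_eq_adjoint, ← star_eq_adjoint, ← star_mul, ← star_mul, hAN]
  -- the four basic maps commute pairwise as needed
  have c11 : Commute (LinearMap.mulLeft ℂ (adjoint A)) (LinearMap.mulLeft ℂ (adjoint N)) := by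
    unfold Commute SemiconjBy
    ext x
    simp only [Module.End.mul_apply, LinearMap.mulLeft_apply, ← mul_assoc]
    rw [hadj]
  have c22 : Commute (LinearMap.mulRight ℂ A) (LinearMap.mulRight ℂ N) := by
    unfold Commute SemiconjBy
    ext x
    simp only [Module.End.mul_apply, LinearMap.mulRight_apply, mul_assoc]
    rw [hAN]
  have c12 : Commute (LinearMap.mulLeft ℂ (adjoint A)) (LinearMap.mulRight ℂ N) :=
    LinearMap.commute_mulLeft_right _ _
  have c21 : Commute (LinearMap.mulRight ℂ A) (LinearMap.mulLeft ℂ (adjoint N)) :=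
    (LinearMap.commute_mulLeft_right _ _).symm
  have hfg : Commute f g :=
    Commute.sub_left (Commute.sub_right c11 c12) (Commute.sub_right c21 c22)
  -- `f ^ m 1 = 0`
  have hfA : (⇑f : (H →L[ℂ] H) → (H →L[ℂ] H)) =
      fun Z : H →L[ℂ] H => adjoint A * Z - Z * A := by
    funext Z
    simp [hf, LinearMap.mulLeft_apply, LinearMap.mulRight_apply]
  have hfm : (f ^ m) 1 = 0 := by
    rw [Module.End.pow_apply, hfA, hA]
  have hfk : ∀ k, m ≤ k → (f ^ k) 1 = 0 := by
    intro k hk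
    have : f ^ k = f ^ (k - m) * f ^ m := by
      rw [← pow_add]; congr 1; omega
    rw [this, Module.End.mul_apply, hfm, map_zero]
  -- `g ^ (2*q - 1) = 0`
  have haq : (LinearMap.mulLeft ℂ (adjoint N)) ^ q = 0 := by
    rw [LinearMap.pow_mulLeft]
    have : (adjoint N) ^ q = 0 := by
      rw [← star_eq_adjoint, ← star_pow, hN, star_zero]
    rw [this, LinearMap.mulLeft_zero_eq_zero]
  have hbq : (-(LinearMap.mulRight ℂ N) : Module.End ℂ (H →L[ℂ] H)) ^ q = 0 := by
    rw [neg_pow ((LinearMap.mulRight ℂ N : Module.End ℂ (H →L[ℂ] H)))]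
    rw [LinearMap.pow_mulRight, hN, LinearMap.mulRight_zero_eq_zero, mul_zero]
  have hgq : g ^ (2 * q - 1) = 0 := by
    have hab : Commute (LinearMap.mulLeft ℂ (adjoint N) : Module.End ℂ (H →L[ℂ] H))
        (-(LinearMap.mulRight ℂ N) : Module.End ℂ (H →L[ℂ] H)) := by
      have h0 : Commute (LinearMap.mulLeft ℂ (adjoint N) : Module.End ℂ (H →L[ℂ] H))
          (LinearMap.mulRight ℂ N) := LinearMap.commute_mulLeft_right _ _
      exact h0.neg_right
    have : g = (LinearMap.mulLeft ℂ (adjoint N) : Module.End ℂ (H →L[ℂ] H))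
        + -(LinearMap.mulRight ℂ N) := by
      rw [hg, sub_eq_add_neg]
    rw [this, hab.add_pow]
    apply Finset.sum_eq_zero
    intro k hk
    simp only [Finset.mem_range] at hk
    rcases le_or_gt q k with h | h
    · rw [pow_eq_zero_of_le h haq, zero_mul, zero_mul]
    · have : q ≤ 2 * q - 1 - k := by omega
      rw [pow_eq_zero_of_le this hbq, mul_zero, zero_mul]
  have hgj : ∀ j, 2 * q - 1 ≤ j → g ^ j = 0 := fun j hj => pow_eq_zero_of_le hj hgq
  -- the map for `A + N` is `f + g`
  have hsum : (fun Z : H →L[ℂ] H => adjoint (A + N) * Z - Z * (A + N)) = ⇑(f + g) := by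
    funext Z
    have : adjoint (A + N) = adjoint A + adjoint N := by
      rw [← star_eq_adjoint, ← star_eq_adjoint, ← star_eq_adjoint, star_add]
    simp only [this, LinearMap.add_apply, hf, hg, LinearMap.sub_apply,
      LinearMap.mulLeft_apply, LinearMap.mulRight_apply, add_mul, mul_add]
    abel
  rw [hsum, ← Module.End.pow_apply]
  rw [hfg.add_pow]
  rw [LinearMap.sum_apply]
  apply Finset.sum_eq_zero
  intro k hk
  simp only [Finset.mem_range] at hk
  rcases le_or_gt m k with h | h
  · have : f ^ k * g ^ (m + 2 * q - 2 - k) = g ^ (m + 2 * q - 2 - k) * f ^ k :=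
      (hfg.pow_pow _ _)
    rw [Module.End.mul_apply, Module.End.mul_apply, ← Module.End.mul_apply (f ^ k), this,
      Module.End.mul_apply]
    have h1 : ((m + 2 * q - 2).choose k : Module.End ℂ (H →L[ℂ] H)) 1
        = ((m + 2 * q - 2).choose k : ℕ) • (1 : H →L[ℂ] H) := by
      simp [Module.End.natCast_apply]
    rw [h1, map_nsmul, map_nsmul, hfk k h, map_zero, smul_zero]
  · have : 2 * q - 1 ≤ m + 2 * q - 2 - k := by omega
    rw [Module.End.mul_apply, Module.End.mul_apply, hgj _ this]
    simp
end

section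
/- Let A = A₁ ⊕ A₂ acting on H = H₁ ⊕ H₂, where A₁ is invertible on H₁ and A₂ is p-nilpotent on H₂ (A₂^p = 0). If X = [X_{ik}]_{i,k=1,2} is a bounded operator on H₁ ⊕ H₂ with Δ_{A,A}^m(X) = Σ_{j=0}^m (-1)^j C(m,j) A^{m-j} X A^{m-j} = 0, then X₁₂ = X₂₁ = X₂₂ = 0, i.e. X = X₁₁ ⊕ 0. -/
section Aux

variable {E F : Type*} [NormedAddCommGroup E] [NormedSpace ℂ E]
  [NormedAddCommGroup F] [NormedSpace ℂ F]

/-- Two-sided multiplication `Z ↦ B ∘L Z ∘L C` as a linear endomorphism. -/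
def lrAux (B : E →L[ℂ] E) (C : F →L[ℂ] F) : (F →L[ℂ] E) →ₗ[ℂ] (F →L[ℂ] E) where
  toFun Z := B ∘L Z ∘L C
  map_add' := by intros; ext; simp
  map_smul' := by intros; ext; simp

lemma lrAux_pow (B : E →L[ℂ] E) (C : F →L[ℂ] F) (j : ℕ) :
    ∀ Z : F →L[ℂ] E, ((lrAux B C) ^ j) Z = (B ^ j) ∘L Z ∘L (C ^ j) := by
  induction j with
  | zero => intro Z; ext; simp
  | succ k ih =>
      intro Z
      rw [pow_succ, Module.End.mul_apply]
      have hZ : (lrAux B C) Z = B ∘L Z ∘L C := rfl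
      rw [hZ, ih]
      have h1 : ∀ y, (B ^ k) (B y) = (B ^ (k + 1)) y := fun y => by
        simp [pow_succ, ContinuousLinearMap.mul_apply]
      have h2 : ∀ x, C ((C ^ k) x) = (C ^ (k + 1)) x := fun x => by
        simp [pow_succ', ContinuousLinearMap.mul_apply]
      ext x
      simp only [ContinuousLinearMap.comp_apply, h2, h1]

lemma iterAux (B : E →L[ℂ] E) (C : F →L[ℂ] F) (m : ℕ) :
    ∀ W : F →L[ℂ] E, (fun W : F →L[ℂ] E => B ∘L W ∘L C - W)^[m] W
      = ((lrAux B C - 1 : Module.End ℂ (F →L[ℂ] E)) ^ m) W := by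
  induction m with
  | zero => intro W; simp
  | succ k ih =>
      intro W
      have hW : (lrAux B C - 1 : Module.End ℂ (F →L[ℂ] E)) W = B ∘L W ∘L C - W := by
        simp only [LinearMap.sub_apply, Module.End.one_apply]; rfl
      rw [Function.iterate_succ_apply, pow_succ, Module.End.mul_apply, hW, ← ih]

lemma keyAux (B : E →L[ℂ] E) (C : F →L[ℂ] F) (p m : ℕ)
    (hBC : B ^ p = 0 ∨ C ^ p = 0) (Z : F →L[ℂ] E)
    (hZ : (fun W : F →L[ℂ] E => B ∘L W ∘L C - W)^[m] Z = 0) : Z = 0 := by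
  set n := lrAux B C with hn
  have hnil : IsNilpotent n := by
    refine ⟨p, LinearMap.ext fun W => ?_⟩
    rw [lrAux_pow]
    rcases hBC with h | h <;> simp [h]
  have hu : IsUnit ((n - 1 : Module.End ℂ (F →L[ℂ] E)) ^ m) := by
    have h1 : IsUnit (1 - n) := hnil.isUnit_one_sub
    rw [show n - 1 = -(1 - n) by abel]
    exact (h1.neg).pow m
  have hiter := iterAux B C m
  have hbij := (Module.End.isUnit_iff _).mp hu
  have : ((n - 1 : Module.End ℂ (F →L[ℂ] E)) ^ m) Z
      = ((n - 1 : Module.End ℂ (F →L[ℂ] E)) ^ m) 0 := by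
    rw [map_zero, ← hiter, hZ]
  exact hbij.injective this

end Aux

open ContinuousLinearMap in
/-- If `A = A₁ ⊕ A₂` with `A₁` invertible and `A₂` `p`-nilpotent, and
`Δ_{A,A}^m(X) = 0`, then the off-diagonal and `(2,2)` entries of `X` vanish:
`X = X₁₁ ⊕ 0`. -/
theorem stmt_10 {H₁ H₂ : Type*}
    [NormedAddCommGroup H₁] [InnerProductSpace ℂ H₁] [CompleteSpace H₁]
    [NormedAddCommGroup H₂] [InnerProductSpace ℂ H₂] [CompleteSpace H₂]
    (A₁ A₁' : H₁ →L[ℂ] H₁) (A₂ : H₂ →L[ℂ] H₂) (p m : ℕ) (hp : 1 ≤ p) (hm : 1 ≤ m)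
    (hA₁ : A₁ * A₁' = 1) (hA₁' : A₁' * A₁ = 1) (hA₂ : A₂ ^ p = 0)
    (X : H₁ × H₂ →L[ℂ] H₁ × H₂)
    (h : (fun Y : H₁ × H₂ →L[ℂ] H₁ × H₂ =>
        (A₁.prodMap A₂) * Y * (A₁.prodMap A₂) - Y)^[m] X = 0) :
    (fst ℂ H₁ H₂) ∘L X ∘L (inr ℂ H₁ H₂) = 0 ∧
      (snd ℂ H₁ H₂) ∘L X ∘L (inl ℂ H₁ H₂) = 0 ∧
      (snd ℂ H₁ H₂) ∘L X ∘L (inr ℂ H₁ H₂) = 0 := by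
  set Δ : (H₁ × H₂ →L[ℂ] H₁ × H₂) → (H₁ × H₂ →L[ℂ] H₁ × H₂) :=
    fun Y => (A₁.prodMap A₂) * Y * (A₁.prodMap A₂) - Y with hΔ
  -- block (1,2)
  have h12 : (fst ℂ H₁ H₂) ∘L X ∘L (inr ℂ H₁ H₂) = 0 := by
    apply keyAux A₁ A₂ p m (Or.inr hA₂)
    have hsc : Function.Semiconj
        (fun Y : H₁ × H₂ →L[ℂ] H₁ × H₂ => (fst ℂ H₁ H₂) ∘L Y ∘L (inr ℂ H₁ H₂))
        Δ
        (fun W : H₂ →L[ℂ] H₁ => A₁ ∘L W ∘L A₂ - W) := by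
      intro Y
      ext x
      simp [hΔ, ContinuousLinearMap.mul_apply]
    have := hsc.iterate_right m X
    rw [← this, h]
    ext x; simp
  have h21 : (snd ℂ H₁ H₂) ∘L X ∘L (inl ℂ H₁ H₂) = 0 := by
    apply keyAux A₂ A₁ p m (Or.inl hA₂)
    have hsc : Function.Semiconj
        (fun Y : H₁ × H₂ →L[ℂ] H₁ × H₂ => (snd ℂ H₁ H₂) ∘L Y ∘L (inl ℂ H₁ H₂))
        Δ
        (fun W : H₁ →L[ℂ] H₂ => A₂ ∘L W ∘L A₁ - W) := by
      intro Y
      ext x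
      simp [hΔ, ContinuousLinearMap.mul_apply]
    have := hsc.iterate_right m X
    rw [← this, h]
    ext x; simp
  have h22 : (snd ℂ H₁ H₂) ∘L X ∘L (inr ℂ H₁ H₂) = 0 := by
    apply keyAux A₂ A₂ p m (Or.inl hA₂)
    have hsc : Function.Semiconj
        (fun Y : H₁ × H₂ →L[ℂ] H₁ × H₂ => (snd ℂ H₁ H₂) ∘L Y ∘L (inr ℂ H₁ H₂))
        Δ
        (fun W : H₂ →L[ℂ] H₂ => A₂ ∘L W ∘L A₂ - W) := by
      intro Y
      ext x
      simp [hΔ, ContinuousLinearMap.mul_apply]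
    have := hsc.iterate_right m X
    rw [← this, h]
    ext x; simp
  exact ⟨h12, h21, h22⟩
end

section
/- Let A be a Drazin invertible bounded operator on a Hilbert space with Drazin inverse A_d. If Δ_{A,A}^m(X) = 0 for some bounded operator X, then δ_{A_d, A}^m(X) = 0. -/
private lemma drazin_aux {R : Type*} [Ring R] (l l' r : R) (p : ℕ)
    (hll' : Commute l l') (hlr : Commute l r) (hl'r : Commute l' r)
    (hel : (l * l') * l' ^ p = l' ^ p) :
    ∃ W : R, Commute (l' * r - 1) W ∧ W * (l' * r - 1) = l - r := by
  have hrT : Commute r (l' * r - 1) :=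
    ((hl'r.symm).mul_right (Commute.refl r)).sub_right (Commute.one_right r)
  have h1e : (1 - l * l') * (l' * r) ^ p = 0 := by
    rw [hl'r.mul_pow, sub_mul, one_mul, ← mul_assoc, hel, sub_self]
  have hgeom : (∑ i ∈ Finset.range p, (l' * r) ^ i) * (l' * r - 1) = (l' * r) ^ p - 1 :=
    geom_sum_mul _ p
  have hkey2 : (1 - l * l') * (∑ i ∈ Finset.range p, (l' * r) ^ i) * (l' * r - 1)
      = -(1 - l * l') := by
    rw [mul_assoc, hgeom, mul_sub, mul_one, h1e, zero_sub]
  have hlT : l * (l' * r - 1) = (l * l') * r - l := by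
    rw [mul_sub, mul_one, ← mul_assoc]
  have h1' : (1 - l * l') * (∑ i ∈ Finset.range p, (l' * r) ^ i) * r * (l' * r - 1)
      = -((1 - l * l') * r) := by
    rw [mul_assoc ((1 - l * l') * (∑ i ∈ Finset.range p, (l' * r) ^ i)) r, hrT.eq,
      ← mul_assoc, hkey2, neg_mul]
  refine ⟨-l + (1 - l * l') * (∑ i ∈ Finset.range p, (l' * r) ^ i) * r, ?_, ?_⟩
  · -- commutation
    have hTl : Commute (l' * r - 1) l :=
      (Commute.mul_left hll'.symm hlr.symm).sub_left (Commute.one_left l)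
    have hTr : Commute (l' * r - 1) r := hrT.symm
    have hTl' : Commute (l' * r - 1) l' :=
      (Commute.mul_left (Commute.refl l') hl'r.symm).sub_left (Commute.one_left l')
    have hTe : Commute (l' * r - 1) (l * l') := hTl.mul_right hTl'
    have hTQs : Commute (l' * r - 1) (∑ i ∈ Finset.range p, (l' * r) ^ i) :=
      Commute.sum_right _ _ _ fun i _ => (hTl'.mul_right hTr).pow_right i
    exact Commute.add_right hTl.neg_right
      ((((Commute.one_right _).sub_right hTe).mul_right hTQs).mul_right hTr)
  · rw [add_mul, neg_mul, hlT, h1', sub_mul, one_mul]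
    abel

/-- If `A` is Drazin invertible with Drazin inverse `A_d` and `Δ_{A,A}^m(X) = 0`,
then `δ_{A_d,A}^m(X) = 0`. -/
theorem stmt_11 {H : Type*} [NormedAddCommGroup H] [InnerProductSpace ℂ H] [CompleteSpace H]
    (A Ad X : H →L[ℂ] H) (m : ℕ) (hm : 1 ≤ m)
    (hc : Ad * A = A * Ad) (h2 : Ad * Ad * A = Ad)
    (hp : ∃ p : ℕ, 1 ≤ p ∧ A ^ (p + 1) * Ad = A ^ p)
    (h : (fun Y : H →L[ℂ] H => A * Y * A - Y)^[m] X = 0) :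
    (fun Y : H →L[ℂ] H => Ad * Y - Y * A)^[m] X = 0 := by
  obtain ⟨p, hp1, hpA⟩ := hp
  have hll' : Commute (LinearMap.mulLeft ℂ Ad : Module.End ℂ (H →L[ℂ] H))
      (LinearMap.mulLeft ℂ A) := by
    refine LinearMap.ext fun x => ?_
    simp only [Module.End.mul_apply, LinearMap.mulLeft_apply]
    rw [← mul_assoc, ← mul_assoc, hc]
  have hlr : Commute (LinearMap.mulLeft ℂ Ad : Module.End ℂ (H →L[ℂ] H))
      (LinearMap.mulRight ℂ A) := by
    refine LinearMap.ext fun x => ?_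
    simp [Module.End.mul_apply, LinearMap.mulLeft_apply, LinearMap.mulRight_apply, mul_assoc]
  have hl'r : Commute (LinearMap.mulLeft ℂ A : Module.End ℂ (H →L[ℂ] H))
      (LinearMap.mulRight ℂ A) := by
    refine LinearMap.ext fun x => ?_
    simp [Module.End.mul_apply, LinearMap.mulLeft_apply, LinearMap.mulRight_apply, mul_assoc]
  have hl'pow : ∀ n : ℕ, (LinearMap.mulLeft ℂ A : Module.End ℂ (H →L[ℂ] H)) ^ n
      = LinearMap.mulLeft ℂ (A ^ n) := by
    intro n
    induction n with
    | zero => exact LinearMap.ext fun x => by simp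
    | succ n ih =>
      rw [pow_succ, ih]
      refine LinearMap.ext fun x => ?_
      simp [Module.End.mul_apply, LinearMap.mulLeft_apply, pow_succ, mul_assoc]
  have hAdApow : Ad * A * A ^ p = A ^ p := by
    have hcomm : Commute Ad A := hc
    calc Ad * A * A ^ p = Ad * A ^ (p + 1) := by rw [mul_assoc, ← pow_succ']
    _ = A ^ (p + 1) * Ad := hcomm.pow_right (p + 1)
    _ = A ^ p := hpA
  have hel : ((LinearMap.mulLeft ℂ Ad : Module.End ℂ (H →L[ℂ] H)) * LinearMap.mulLeft ℂ A)
      * (LinearMap.mulLeft ℂ A : Module.End ℂ (H →L[ℂ] H)) ^ p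
      = (LinearMap.mulLeft ℂ A : Module.End ℂ (H →L[ℂ] H)) ^ p := by
    rw [hl'pow]
    refine LinearMap.ext fun x => ?_
    simp only [Module.End.mul_apply, LinearMap.mulLeft_apply]
    rw [← mul_assoc, ← mul_assoc, hAdApow]
  obtain ⟨W, hTW, hWT⟩ := drazin_aux (LinearMap.mulLeft ℂ Ad : Module.End ℂ (H →L[ℂ] H))
    (LinearMap.mulLeft ℂ A) (LinearMap.mulRight ℂ A) p hll' hlr hl'r hel
  have hfun1 : ⇑((LinearMap.mulLeft ℂ A : Module.End ℂ (H →L[ℂ] H)) * LinearMap.mulRight ℂ A - 1)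
      = (fun Y : H →L[ℂ] H => A * Y * A - Y) := by
    funext Z
    simp [LinearMap.sub_apply, Module.End.mul_apply, LinearMap.mulLeft_apply,
      LinearMap.mulRight_apply, Module.End.one_apply, mul_assoc]
  have hTm : (((LinearMap.mulLeft ℂ A : Module.End ℂ (H →L[ℂ] H)) * LinearMap.mulRight ℂ A - 1)
      ^ m) X = 0 := by
    rw [Module.End.pow_apply, hfun1]; exact h
  have hfun2 : ⇑((LinearMap.mulLeft ℂ Ad : Module.End ℂ (H →L[ℂ] H)) - LinearMap.mulRight ℂ A)
      = (fun Y : H →L[ℂ] H => Ad * Y - Y * A) := by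
    funext Z
    simp [LinearMap.sub_apply, LinearMap.mulLeft_apply, LinearMap.mulRight_apply]
  calc (fun Y : H →L[ℂ] H => Ad * Y - Y * A)^[m] X
      = (((LinearMap.mulLeft ℂ Ad : Module.End ℂ (H →L[ℂ] H)) - LinearMap.mulRight ℂ A) ^ m) X := by
        rw [Module.End.pow_apply, hfun2]
    _ = 0 := by
        rw [← hWT, (hTW.symm).mul_pow, Module.End.mul_apply, hTm, map_zero]
end

section
/- Let A be a Drazin invertible bounded operator on a Hilbert space with Drazin inverse A_d. If Δ_{A_d*, A}^m(X) = 0 for some bounded operator X, then δ_{A*, A}^m(X) = 0; that is, if A is left-(X,m)-invertible by the adjoint of its Drazin inverse, then A is (X,m)-selfadjoint. -/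
open ContinuousLinearMap in
/-- If `A` is Drazin invertible with Drazin inverse `A_d` and `Δ_{A_d*,A}^m(X) = 0`,
then `δ_{A*,A}^m(X) = 0`, i.e. `A` is `(X,m)`-selfadjoint. -/
theorem stmt_12 {H : Type*} [NormedAddCommGroup H] [InnerProductSpace ℂ H] [CompleteSpace H]
    (A Ad X : H →L[ℂ] H) (m : ℕ) (hm : 1 ≤ m)
    (hc : Ad * A = A * Ad) (h2 : Ad * Ad * A = Ad)
    (hp : ∃ p : ℕ, 1 ≤ p ∧ A ^ (p + 1) * Ad = A ^ p)
    (h : (fun Y : H →L[ℂ] H => adjoint Ad * Y * A - Y)^[m] X = 0) :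
    (fun Y : H →L[ℂ] H => adjoint A * Y - Y * A)^[m] X = 0 := by
  set B := adjoint Ad with hBdef
  set C := adjoint A with hCdef
  -- key algebraic fact: C * (B * B) = B  (adjoint of Ad * Ad * A = Ad)
  have key : C * (B * B) = B := by
    have hk := congrArg adjoint h2
    simp only [hBdef, hCdef, ← star_eq_adjoint, star_mul] at hk ⊢
    exact hk
  -- δ commutes with left multiplication by C
  have hCmul : ∀ (n : ℕ) (Z : H →L[ℂ] H),
      (fun Y : H →L[ℂ] H => C * Y - Y * A)^[n] (C * Z)
        = C * (fun Y : H →L[ℂ] H => C * Y - Y * A)^[n] Z := by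
    intro n
    induction n with
    | zero => intro Z; simp
    | succ n ih =>
      intro Z
      rw [Function.iterate_succ_apply, Function.iterate_succ_apply]
      have e : C * (C * Z) - C * Z * A = C * (C * Z - Z * A) := by noncomm_ring
      rw [e, ih]
  -- main induction
  have main : ∀ (n : ℕ) (Y : H →L[ℂ] H),
      (fun Y : H →L[ℂ] H => B * Y * A - Y)^[n] Y = 0 →
      C * (B * Y) = Y ∧ (fun Y : H →L[ℂ] H => C * Y - Y * A)^[n] Y = 0 := by
    intro n
    induction n with
    | zero =>
      intro Y hY
      simp only [Function.iterate_zero, id_eq] at hY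
      subst hY
      simp
    | succ n ih =>
      intro Y hY
      rw [Function.iterate_succ_apply] at hY
      obtain ⟨h1, hδ⟩ := ih _ hY
      -- h1 : C * (B * (B * Y * A - Y)) = B * Y * A - Y
      have hE : C * (B * Y) = Y := by
        have e1 : C * (B * (B * Y * A - Y)) = B * Y * A - C * (B * Y) := by
          have e2 : C * (B * (B * Y * A - Y))
              = C * (B * B) * Y * A - C * (B * Y) := by noncomm_ring
          rw [e2, key]
        rw [e1] at h1
        exact sub_right_inj.mp h1
      refine ⟨hE, ?_⟩
      rw [Function.iterate_succ_apply]
      -- δ Y = - (C * (Δ Y)) using hE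
      have hδY : C * Y - Y * A = -(C * (B * Y * A - Y)) := by
        have : Y * A = C * (B * Y) * A := by rw [hE]
        rw [this]
        noncomm_ring
      rw [hδY]
      have hneg : ∀ (k : ℕ) (Z : H →L[ℂ] H),
          (fun Y : H →L[ℂ] H => C * Y - Y * A)^[k] (-Z)
            = -((fun Y : H →L[ℂ] H => C * Y - Y * A)^[k] Z) := by
        intro k
        induction k with
        | zero => intro Z; simp
        | succ k ihk =>
          intro Z
          rw [Function.iterate_succ_apply, Function.iterate_succ_apply]
          have e : C * (-Z) - (-Z) * A = -(C * Z - Z * A) := by noncomm_ring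
          rw [e, ihk]
      rw [hneg, hCmul, hδ, mul_zero, neg_zero]
  exact (main m X h).2
end

section
/- Let A be a Drazin invertible bounded operator on a Hilbert space with Drazin inverse A_d. If Δ_{A*, A}^m(X) = 0 for some bounded operator X, then δ_{A_d*, A}^m(X) = 0. -/
section Aux
variable {R : Type*} [Ring R]

theorem aux_nilp (a c : R) (p : ℕ) (hcp : c ^ p = 0) {z : R} (hz : c * z * a = z) :
    z = 0 := by
  have key : ∀ k, z = c ^ k * z * a ^ k := by
    intro k
    induction k with
    | zero => simp
    | succ n ih =>
      calc z = c * z * a := hz.symm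
        _ = c * (c ^ n * z * a ^ n) * a := by rw [← ih]
        _ = c ^ (n + 1) * z * a ^ (n + 1) := by
            rw [pow_succ' c, pow_succ a]
            simp only [mul_assoc]
  rw [key p, hcp, zero_mul, zero_mul]

theorem aux_F (a c : R) (p : ℕ) (hcp : c ^ p = 0) (m : ℕ) :
    ∀ z : R, (fun y : R => c * y * a - y)^[m] z = 0 → z = 0 := by
  induction m with
  | zero => intro z hz; simpa using hz
  | succ n ih =>
    intro z hz
    rw [Function.iterate_succ_apply] at hz
    have h1 : c * z * a - z = 0 := ih _ hz
    exact aux_nilp a c p hcp (sub_eq_zero.mp h1)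

theorem aux_main (a s e x : R) (p m : ℕ)
    (h1 : s * e = e * s) (h2 : e * e * s = e)
    (h3 : (s * (1 - e * s)) ^ p = 0)
    (h : (fun y : R => s * y * a - y)^[m] x = 0) :
    (fun y : R => e * y - y * a)^[m] x = 0 := by
  set q : R := 1 - e * s with hqdef
  set c : R := s * q with hcdef
  have heses : e * s * (e * s) = e * s := by
    calc e * s * (e * s) = e * (s * e) * s := by simp only [mul_assoc]
      _ = e * (e * s) * s := by rw [h1]
      _ = e * e * s * s := by simp only [mul_assoc]
      _ = e * s := by rw [h2]
  have hqq : q * q = q := by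
    simp only [hqdef, sub_mul, mul_sub, one_mul, mul_one, heses]
    abel
  have hqs : q * s = s * q := by
    have hs : s * (e * s) = e * s * s := by rw [← mul_assoc, h1]
    simp only [hqdef, sub_mul, mul_sub, one_mul, mul_one, hs]
  have hcq : c * q = q * s := by
    rw [hcdef, mul_assoc, hqq, hqs]
  have L1 : ∀ (k : ℕ) (y : R),
      q * ((fun y : R => s * y * a - y)^[k] y)
        = (fun y : R => c * y * a - y)^[k] (q * y) := by
    intro k
    induction k with
    | zero => intro y; rfl
    | succ n ih =>
      intro y
      rw [Function.iterate_succ_apply', Function.iterate_succ_apply', ← ih]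
      set z := (fun y : R => s * y * a - y)^[n] y with hz
      show q * (s * z * a - z) = c * (q * z) * a - q * z
      rw [mul_sub]
      congr 1
      calc q * (s * z * a) = q * s * z * a := by simp only [mul_assoc]
        _ = c * q * z * a := by rw [hcq]
        _ = c * (q * z) * a := by simp only [mul_assoc]
  have hqx : q * x = 0 := by
    apply aux_F a c p h3 m
    rw [← L1 m x, h, mul_zero]
  have hF0 : ∀ k : ℕ, (fun y : R => c * y * a - y)^[k] (0 : R) = 0 := by
    intro k
    induction k with
    | zero => rfl
    | succ n ih => rw [Function.iterate_succ_apply', ih]; simp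
  have hqD : ∀ k : ℕ, q * ((fun y : R => s * y * a - y)^[k] x) = 0 := by
    intro k; rw [L1, hqx, hF0]
  have hesD : ∀ k : ℕ, e * (s * ((fun y : R => s * y * a - y)^[k] x))
      = (fun y : R => s * y * a - y)^[k] x := by
    intro k
    have h0 := hqD k
    rw [hqdef, sub_mul, one_mul, sub_eq_zero] at h0
    rw [← mul_assoc, ← h0]
  have L4 : ∀ k : ℕ, (fun y : R => e * y - y * a)^[k] x
      = ((-1 : ℤ) ^ k) • (e ^ k * ((fun y : R => s * y * a - y)^[k] x)) := by
    intro k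
    induction k with
    | zero => simp
    | succ n ih =>
      rw [Function.iterate_succ_apply', Function.iterate_succ_apply', ih]
      set D := (fun y : R => s * y * a - y)^[n] x with hD
      show e * ((-1 : ℤ) ^ n • (e ^ n * D)) - ((-1 : ℤ) ^ n • (e ^ n * D)) * a
          = (-1 : ℤ) ^ (n + 1) • (e ^ (n + 1) * (s * D * a - D))
      have hew : e * (e ^ n * D) = e ^ (n + 1) * D := by
        rw [pow_succ' e, mul_assoc]
      have key : e ^ n * D * a = e ^ (n + 1) * (s * D * a) := by
        calc e ^ n * D * a = e ^ n * (e * (s * D)) * a := by rw [hesD n]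
          _ = e ^ n * e * (s * D * a) := by simp only [mul_assoc]
          _ = e ^ (n + 1) * (s * D * a) := by rw [pow_succ]
      rw [mul_smul_comm, smul_mul_assoc, ← smul_sub, pow_succ (-1 : ℤ), mul_neg_one,
        neg_smul, ← smul_neg]
      congr 1
      rw [hew, key, mul_sub, neg_sub]
  rw [L4 m, h, mul_zero, smul_zero]

end Aux

open ContinuousLinearMap in
/-- If `A` is Drazin invertible with Drazin inverse `A_d` and `Δ_{A*,A}^m(X) = 0`,
then `δ_{A_d*,A}^m(X) = 0`. -/
theorem stmt_13 {H : Type*} [NormedAddCommGroup H] [InnerProductSpace ℂ H] [CompleteSpace H]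
    (A Ad X : H →L[ℂ] H) (m : ℕ) (hm : 1 ≤ m)
    (hc : Ad * A = A * Ad) (h2 : Ad * Ad * A = Ad)
    (hp : ∃ p : ℕ, 1 ≤ p ∧ A ^ (p + 1) * Ad = A ^ p)
    (h : (fun Y : H →L[ℂ] H => adjoint A * Y * A - Y)^[m] X = 0) :
    (fun Y : H →L[ℂ] H => adjoint Ad * Y - Y * A)^[m] X = 0 := by
  obtain ⟨p, hp1, hpe⟩ := hp
  simp only [← ContinuousLinearMap.star_eq_adjoint] at h ⊢
  have hAAd : A * Ad * Ad = Ad := by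
    rw [← hc, mul_assoc, ← hc, ← mul_assoc, h2]
  have hPP : (A * Ad) * (A * Ad) = A * Ad := by
    rw [← mul_assoc, mul_assoc A Ad A, hc, mul_assoc, hAAd]
  have hAdApow : ∀ k : ℕ, Ad * A ^ k = A ^ k * Ad := by
    intro k
    induction k with
    | zero => simp
    | succ n ih => rw [pow_succ, ← mul_assoc, ih, mul_assoc, hc, ← mul_assoc]
  have hq'A : (1 - A * Ad) * A = A * (1 - A * Ad) := by
    simp only [sub_mul, mul_sub, one_mul, mul_one]
    rw [mul_assoc, hc]
  have hidem : IsIdempotentElem (1 - A * Ad) :=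
    (IsIdempotentElem.one_sub (show IsIdempotentElem (A * Ad) from hPP))
  have hbp : ((1 - A * Ad) * A) ^ p = 0 := by
    have hcomm : Commute (1 - A * Ad) A := hq'A
    rw [hcomm.mul_pow]
    obtain ⟨k, rfl⟩ := Nat.exists_eq_add_of_le hp1
    rw [add_comm 1 k] at hpe ⊢
    rw [hidem.pow_succ_eq]
    have hPA : (A * Ad) * A ^ (k + 1) = A ^ (k + 1) := by
      rw [mul_assoc, hAdApow, ← mul_assoc, ← pow_succ' A, hpe]
    rw [sub_mul, one_mul, hPA, sub_self]
  have h1' : star A * star Ad = star Ad * star A := by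
    calc star A * star Ad = star (Ad * A) := (star_mul _ _).symm
      _ = star (A * Ad) := by rw [hc]
      _ = star Ad * star A := star_mul _ _
  have h2' : star Ad * star Ad * star A = star Ad := by
    rw [mul_assoc, ← star_mul, ← star_mul, hAAd]
  have h3' : (star A * (1 - star Ad * star A)) ^ p = 0 := by
    have hcs : star A * (1 - star Ad * star A) = star ((1 - A * Ad) * A) := by
      rw [star_mul, star_sub, star_one, star_mul]
    rw [hcs, ← star_pow, hbp, star_zero]
  exact aux_main A (star A) (star Ad) X p m h1' h2' h3' h
end

section
/- Let A = A₁ ⊕ A₂ on H₁ ⊕ H₂ with A₁ invertible and A₂ p-nilpotent, and suppose p < m. If δ_{A,A}^m(X) = Σ_{j=0}^m (-1)^j C(m,j) A^{m-j} X A^j = 0 for X = [X_{ik}], then X₁₂ = 0 and X₂₁ = 0, i.e., X = X₁₁ ⊕ X₂₂. -/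
/-!
The compression of `δ_{A,A}` to the `(1,2)` corner is the Sylvester operator
`Z ↦ A₁ Z - Z A₂`, and to the `(2,1)` corner it is `Z ↦ A₂ Z - Z A₁`; so the corners of
`δ_{A,A}^m(X)` are the `m`-th iterates of these applied to `X₁₂` and `X₂₁`. Each has trivial
kernel: `A₁ Z = Z A₂` gives `A₁ⁿ Z = Z A₂ⁿ = 0` for `n` past the nilpotency index, and `A₁ⁿ`
is invertible.
-/

theorem eq_zero_of_iterate_eq_zero {α : Type*} [Zero α] {f : α → α}
    (hf : ∀ x, f x = 0 → x = 0) (n : ℕ) (x : α) (h : f^[n] x = 0) : x = 0 := by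
  induction n with
  | zero => exact h
  | succ n ih => exact ih (hf _ (by rwa [Function.iterate_succ_apply'] at h))

namespace ContinuousLinearMap

section Intertwining

variable {R M N : Type*} [Semiring R]
  [TopologicalSpace M] [AddCommMonoid M] [Module R M]
  [TopologicalSpace N] [AddCommMonoid N] [Module R N]

theorem pow_comp_eq_comp_pow {A : M →L[R] M} {B : N →L[R] N} {Y : N →L[R] M}
    (h : A ∘L Y = Y ∘L B) (n : ℕ) : (A ^ n) ∘L Y = Y ∘L (B ^ n) := by
  induction n with
  | zero => rfl
  | succ n ih =>
    rw [pow_succ' A, pow_succ' B, mul_def, mul_def, comp_assoc, ih, ← comp_assoc, h, comp_assoc]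

theorem eq_zero_of_comp_eq_comp_of_mul_eq_one_of_isNilpotent {A A' : M →L[R] M}
    {B : N →L[R] N} {Y : N →L[R] M} (hA : A' * A = 1) (hB : IsNilpotent B)
    (h : A ∘L Y = Y ∘L B) : Y = 0 := by
  obtain ⟨n, hn⟩ := hB
  calc Y = (A' ^ n * A ^ n) ∘L Y := by rw [pow_mul_pow_eq_one n hA, one_def, id_comp]
    _ = (A' ^ n) ∘L (Y ∘L (B ^ n)) := by rw [mul_def, comp_assoc, pow_comp_eq_comp_pow h]
    _ = 0 := by rw [hn, comp_zero, comp_zero]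

theorem eq_zero_of_comp_eq_comp_of_isNilpotent_of_mul_eq_one {A A' : M →L[R] M}
    {B : N →L[R] N} {Y : M →L[R] N} (hA : A * A' = 1) (hB : IsNilpotent B)
    (h : B ∘L Y = Y ∘L A) : Y = 0 := by
  obtain ⟨n, hn⟩ := hB
  calc Y = Y ∘L (A ^ n * A' ^ n) := by rw [pow_mul_pow_eq_one n hA, one_def, comp_id]
    _ = ((B ^ n) ∘L Y) ∘L (A' ^ n) := by rw [mul_def, ← comp_assoc, pow_comp_eq_comp_pow h]
    _ = 0 := by rw [hn, zero_comp, zero_comp]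

end Intertwining

section Corners

variable {R M₁ M₂ : Type*} [Ring R]
  [TopologicalSpace M₁] [AddCommGroup M₁] [Module R M₁] [IsTopologicalAddGroup M₁]
  [TopologicalSpace M₂] [AddCommGroup M₂] [Module R M₂] [IsTopologicalAddGroup M₂]
  (A₁ : M₁ →L[R] M₁) (A₂ : M₂ →L[R] M₂)

theorem semiconj_fst_comp_comp_inr :
    Function.Semiconj (fun Y : M₁ × M₂ →L[R] M₁ × M₂ => fst R M₁ M₂ ∘L Y ∘L inr R M₁ M₂)
      (fun Y => A₁.prodMap A₂ * Y - Y * A₁.prodMap A₂)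
      (fun Z => A₁ ∘L Z - Z ∘L A₂) := by
  intro Y; ext v; simp

theorem semiconj_snd_comp_comp_inl :
    Function.Semiconj (fun Y : M₁ × M₂ →L[R] M₁ × M₂ => snd R M₁ M₂ ∘L Y ∘L inl R M₁ M₂)
      (fun Y => A₁.prodMap A₂ * Y - Y * A₁.prodMap A₂)
      (fun Z => A₂ ∘L Z - Z ∘L A₁) := by
  intro Y; ext v; simp

end Corners

end ContinuousLinearMap

open ContinuousLinearMap in
theorem stmt_15_general {H₁ H₂ : Type*}
    [NormedAddCommGroup H₁] [InnerProductSpace ℂ H₁]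
    [NormedAddCommGroup H₂] [InnerProductSpace ℂ H₂]
    (A₁ A₁' : H₁ →L[ℂ] H₁) (A₂ : H₂ →L[ℂ] H₂) (p m : ℕ)
    (hA₁ : A₁ * A₁' = 1) (hA₁' : A₁' * A₁ = 1) (hA₂ : A₂ ^ p = 0)
    (X : H₁ × H₂ →L[ℂ] H₁ × H₂)
    (h : (fun Y : H₁ × H₂ →L[ℂ] H₁ × H₂ =>
        (A₁.prodMap A₂) * Y - Y * (A₁.prodMap A₂))^[m] X = 0) :
    (fst ℂ H₁ H₂) ∘L X ∘L (inr ℂ H₁ H₂) = 0 ∧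
      (snd ℂ H₁ H₂) ∘L X ∘L (inl ℂ H₁ H₂) = 0 := by
  have hA₂_nil : IsNilpotent A₂ := ⟨p, hA₂⟩
  have h₁₂ := (semiconj_fst_comp_comp_inr A₁ A₂).iterate_right m X
  have h₂₁ := (semiconj_snd_comp_comp_inl A₁ A₂).iterate_right m X
  simp only [h, zero_comp, comp_zero] at h₁₂ h₂₁
  exact ⟨eq_zero_of_iterate_eq_zero (fun Z hZ =>
      eq_zero_of_comp_eq_comp_of_mul_eq_one_of_isNilpotent hA₁' hA₂_nil (sub_eq_zero.mp hZ)) m _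
      h₁₂.symm,
    eq_zero_of_iterate_eq_zero (fun Z hZ =>
      eq_zero_of_comp_eq_comp_of_isNilpotent_of_mul_eq_one hA₁ hA₂_nil (sub_eq_zero.mp hZ)) m _
      h₂₁.symm⟩

open ContinuousLinearMap in
/-- If `A = A₁ ⊕ A₂` with `A₁` invertible, `A₂` `p`-nilpotent, `p < m`, and
`δ_{A,A}^m(X) = 0`, then the off-diagonal entries of `X` vanish: `X = X₁₁ ⊕ X₂₂`. -/
theorem stmt_15 {H₁ H₂ : Type*}
    [NormedAddCommGroup H₁] [InnerProductSpace ℂ H₁] [CompleteSpace H₁]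
    [NormedAddCommGroup H₂] [InnerProductSpace ℂ H₂] [CompleteSpace H₂]
    (A₁ A₁' : H₁ →L[ℂ] H₁) (A₂ : H₂ →L[ℂ] H₂) (p m : ℕ) (hp : 1 ≤ p) (hpm : p < m)
    (hA₁ : A₁ * A₁' = 1) (hA₁' : A₁' * A₁ = 1) (hA₂ : A₂ ^ p = 0)
    (X : H₁ × H₂ →L[ℂ] H₁ × H₂)
    (h : (fun Y : H₁ × H₂ →L[ℂ] H₁ × H₂ =>
        (A₁.prodMap A₂) * Y - Y * (A₁.prodMap A₂))^[m] X = 0) :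
    (fst ℂ H₁ H₂) ∘L X ∘L (inr ℂ H₁ H₂) = 0 ∧
      (snd ℂ H₁ H₂) ∘L X ∘L (inl ℂ H₁ H₂) = 0 :=
  stmt_15_general A₁ A₁' A₂ p m hA₁ hA₁' hA₂ X h
end

section
/- Let A be Drazin invertible with Drazin inverse A_d, and X a bounded operator with Δ_{A_d*, A}^m(X) = 0, AX = XA, and such that the restriction X₁₁ of X to H₁ = A^p(H) has dense range in H₁. Then A is (m+2p-2)-selfadjoint, where p is the Drazin index of A. -/
/-!
Both `A` and `A_d*` are block diagonal, so `Δ^m_{A_d*,A}(X) = 0` and `AX = XA` descend to the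
top-left block: `Δ^m_{A₁'*,A₁}(X₁₁) = 0` and `A₁X₁₁ = X₁₁A₁`. As `A₁*` inverts `A₁'*`,
`δ_{A₁*,A₁} = -A₁* Δ_{A₁'*,A₁}` with a left factor commuting with `δ_{A₁*,A₁}`, so
`δ^m_{A₁*,A₁}(I) X₁₁ = δ^m_{A₁*,A₁}(X₁₁) = 0`, and the dense range of `X₁₁` gives
`δ^m_{A₁*,A₁}(I) = 0`. On `H₂`, `δ_{A₂*,A₂}` is the difference of the commuting `p`-nilpotent
multiplications by `A₂*` on the left and by `A₂` on the right, so its `(2p-1)`-st power vanishes.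
Finally `δ^k_{A*,A}(I)` is block diagonal with blocks `δ^k_{A₁*,A₁}(I)` and `δ^k_{A₂*,A₂}(I)`.
-/

section GeneralizedDerivation

variable {R : Type*} [Ring R]

/-- The paper's `δ_{c,a}`. -/
def genDeriv (c a : R) (w : R) : R := c * w - w * a

/-- The paper's `Δ_{b,a}`. -/
def sandwichSub (b a : R) (w : R) : R := b * w * a - w

theorem genDeriv_eq_neg_mul_sandwichSub {a b c : R} (hcb : c * b = 1) (w : R) :
    genDeriv c a w = -c * sandwichSub b a w := by
  simp only [genDeriv, sandwichSub, neg_mul, mul_sub, ← mul_assoc, hcb, one_mul]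
  abel

theorem genDeriv_mul_of_commute {a c d : R} (hcd : Commute c d) (w : R) :
    genDeriv c a (d * w) = d * genDeriv c a w := by
  simp only [genDeriv, mul_sub, ← mul_assoc, hcd.eq]

theorem genDeriv_iterate_eq_neg_pow_mul {a b c : R} (hcb : c * b = 1) (k : ℕ) (w : R) :
    (genDeriv c a)^[k] w = (-c) ^ k * (sandwichSub b a)^[k] w := by
  induction k with
  | zero => simp
  | succ k ih =>
    rw [Function.iterate_succ_apply', Function.iterate_succ_apply', ih,
      genDeriv_mul_of_commute ((Commute.refl c).neg_right.pow_right k),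
      genDeriv_eq_neg_mul_sandwichSub hcb, pow_succ, mul_assoc]

theorem genDeriv_iterate_mul_of_commute {a c x : R} (hax : Commute a x) (k : ℕ) (w : R) :
    (genDeriv c a)^[k] (w * x) = (genDeriv c a)^[k] w * x := by
  induction k with
  | zero => rfl
  | succ k ih =>
    rw [Function.iterate_succ_apply', Function.iterate_succ_apply', ih]
    simp only [genDeriv, sub_mul, mul_assoc, hax.eq]

theorem genDeriv_iterate_eq_zero_of_le {a c w : R} {m n : ℕ}
    (h : (genDeriv c a)^[m] w = 0) (hmn : m ≤ n) : (genDeriv c a)^[n] w = 0 := by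
  obtain ⟨k, rfl⟩ := Nat.exists_eq_add_of_le hmn
  rw [add_comm, Function.iterate_add_apply, h]
  exact Function.iterate_fixed (by simp [genDeriv]) k

theorem genDeriv_iterate_one_eq_zero_of_pow_eq_zero {a c : R} {p n : ℕ}
    (hc : c ^ p = 0) (ha : a ^ p = 0) (hn : 2 * p ≤ n + 1) : (genDeriv c a)^[n] 1 = 0 := by
  let L : Module.End ℤ R := LinearMap.mulLeft ℤ c
  let M : Module.End ℤ R := LinearMap.mulRight ℤ a
  have hδ : genDeriv c a = ⇑(L + -M) := by
    ext w; simp [L, M, genDeriv, sub_eq_add_neg]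
  have hL : L ^ p = 0 := by
    rw [LinearMap.pow_mulLeft, hc, LinearMap.mulLeft_zero_eq_zero]
  have hM : (-M) ^ p = 0 := by
    rw [neg_pow, LinearMap.pow_mulRight, ha, LinearMap.mulRight_zero_eq_zero, mul_zero]
  have hLM : Commute L (-M) := (LinearMap.commute_mulLeft_right c a).neg_right
  have hpow : (L + -M) ^ n = 0 :=
    hLM.add_pow_eq_zero_of_add_le_succ_of_pow_eq_zero hL hM (by omega)
  rw [hδ, ← Module.End.coe_pow, hpow, LinearMap.zero_apply]

theorem map_genDeriv_iterate {S : Type*} [Ring S] (f : R →+* S) (c a : R) (k : ℕ) (w : R) :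
    f ((genDeriv c a)^[k] w) = (genDeriv (f c) (f a))^[k] (f w) :=
  (Function.Semiconj.iterate_right (fun w => by simp [genDeriv]) k) w

theorem genDeriv_iterate_prod {S : Type*} [Ring S] (c a w : R × S) (k : ℕ) :
    (genDeriv c a)^[k] w = ((genDeriv c.1 a.1)^[k] w.1, (genDeriv c.2 a.2)^[k] w.2) :=
  Prod.ext (map_genDeriv_iterate (RingHom.fst R S) c a k w)
    (map_genDeriv_iterate (RingHom.snd R S) c a k w)

theorem genDeriv_iterate_one_eq_zero_of_denseRange {𝕜 H : Type*} [NontriviallyNormedField 𝕜]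
    [NormedAddCommGroup H] [NormedSpace 𝕜 H] {a b c X : H →L[𝕜] H} {m : ℕ} (hcb : c * b = 1)
    (haX : Commute a X) (hX : DenseRange X) (hΔ : (sandwichSub b a)^[m] X = 0) :
    (genDeriv c a)^[m] 1 = 0 := by
  have hmul : (genDeriv c a)^[m] 1 * X = 0 := by
    rw [← genDeriv_iterate_mul_of_commute haX, one_mul, genDeriv_iterate_eq_neg_pow_mul hcb, hΔ,
      mul_zero]
  ext x
  exact congrFun (hX.equalizer (map_continuous _) continuous_zero (funext fun y => by
    simpa using DFunLike.congr_fun hmul y)) x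

end GeneralizedDerivation

section BlockDiagonal

open ContinuousLinearMap

variable {𝕜 H₁ H₂ : Type*} [RCLike 𝕜]
  [NormedAddCommGroup H₁] [InnerProductSpace 𝕜 H₁] [NormedAddCommGroup H₂] [InnerProductSpace 𝕜 H₂]

local notation "E" => WithLp.prodContinuousLinearEquiv 2 𝕜 H₁ H₂

noncomputable def blockDiag :
    (H₁ →L[𝕜] H₁) × (H₂ →L[𝕜] H₂) →+* (WithLp 2 (H₁ × H₂) →L[𝕜] WithLp 2 (H₁ × H₂)) where
  toFun T := ((E).symm : H₁ × H₂ →L[𝕜] WithLp 2 (H₁ × H₂)) ∘L T.1.prodMap T.2 ∘L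
    ((E) : WithLp 2 (H₁ × H₂) →L[𝕜] H₁ × H₂)
  map_one' := by ext; rfl
  map_mul' _ _ := by ext; rfl
  map_zero' := by ext; rfl
  map_add' _ _ := by ext; rfl

noncomputable def topLeftBlock :
    (WithLp 2 (H₁ × H₂) →L[𝕜] WithLp 2 (H₁ × H₂)) →ₗ[𝕜] H₁ →L[𝕜] H₁ where
  toFun Y := fst 𝕜 H₁ H₂ ∘L ((E) : WithLp 2 (H₁ × H₂) →L[𝕜] H₁ × H₂) ∘L Y ∘L
    ((E).symm : H₁ × H₂ →L[𝕜] WithLp 2 (H₁ × H₂)) ∘L inl 𝕜 H₁ H₂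
  map_add' _ _ := by ext; rfl
  map_smul' _ _ := by ext; rfl

theorem topLeftBlock_blockDiag_mul (T : (H₁ →L[𝕜] H₁) × (H₂ →L[𝕜] H₂))
    (Y : WithLp 2 (H₁ × H₂) →L[𝕜] WithLp 2 (H₁ × H₂)) :
    topLeftBlock (blockDiag T * Y) = T.1 * topLeftBlock Y := by
  ext; rfl

theorem topLeftBlock_mul_blockDiag (T : (H₁ →L[𝕜] H₁) × (H₂ →L[𝕜] H₂))
    (Y : WithLp 2 (H₁ × H₂) →L[𝕜] WithLp 2 (H₁ × H₂)) :
    topLeftBlock (Y * blockDiag T) = topLeftBlock Y * T.1 := by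
  ext x
  simp [topLeftBlock, blockDiag]

theorem adjoint_blockDiag [CompleteSpace H₁] [CompleteSpace H₂]
    (T : (H₁ →L[𝕜] H₁) × (H₂ →L[𝕜] H₂)) :
    adjoint (blockDiag T) = blockDiag (adjoint T.1, adjoint T.2) := by
  refine ((eq_adjoint_iff _ _).2 fun x y => ?_).symm
  simp [WithLp.prod_inner_apply, blockDiag, adjoint_inner_left]

theorem topLeftBlock_sandwichSub_iterate (b a : (H₁ →L[𝕜] H₁) × (H₂ →L[𝕜] H₂)) (k : ℕ)
    (Y : WithLp 2 (H₁ × H₂) →L[𝕜] WithLp 2 (H₁ × H₂)) :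
    topLeftBlock ((sandwichSub (blockDiag b) (blockDiag a))^[k] Y) =
      (sandwichSub b.1 a.1)^[k] (topLeftBlock Y) :=
  (Function.Semiconj.iterate_right (fun Y => by
    simp only [sandwichSub, map_sub, topLeftBlock_mul_blockDiag, topLeftBlock_blockDiag_mul]) k) Y

end BlockDiagonal

open ContinuousLinearMap in
theorem stmt_16_general {H₁ H₂ : Type*}
    [NormedAddCommGroup H₁] [InnerProductSpace ℂ H₁] [CompleteSpace H₁]
    [NormedAddCommGroup H₂] [InnerProductSpace ℂ H₂] [CompleteSpace H₂]
    (A₁ A₁' : H₁ →L[ℂ] H₁) (A₂ : H₂ →L[ℂ] H₂) (p m : ℕ) (hp : 1 ≤ p) (hm : 1 ≤ m)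
    (hA₁' : A₁' * A₁ = 1) (hA₂ : A₂ ^ p = 0)
    (e : WithLp 2 (H₁ × H₂) ≃L[ℂ] H₁ × H₂)
    (he : e = WithLp.prodContinuousLinearEquiv 2 ℂ H₁ H₂)
    (A Ad : WithLp 2 (H₁ × H₂) →L[ℂ] WithLp 2 (H₁ × H₂))
    (hA : A = (e.symm : H₁ × H₂ →L[ℂ] WithLp 2 (H₁ × H₂)) ∘L (A₁.prodMap A₂) ∘L
      (e : WithLp 2 (H₁ × H₂) →L[ℂ] H₁ × H₂))
    (hAd : Ad = (e.symm : H₁ × H₂ →L[ℂ] WithLp 2 (H₁ × H₂)) ∘L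
      (A₁'.prodMap (0 : H₂ →L[ℂ] H₂)) ∘L (e : WithLp 2 (H₁ × H₂) →L[ℂ] H₁ × H₂))
    (X : WithLp 2 (H₁ × H₂) →L[ℂ] WithLp 2 (H₁ × H₂))
    (hΔ : (fun Y : WithLp 2 (H₁ × H₂) →L[ℂ] WithLp 2 (H₁ × H₂) =>
        adjoint Ad * Y * A - Y)^[m] X = 0)
    (hAX : A * X = X * A)
    (hdense : DenseRange ((fst ℂ H₁ H₂) ∘L (e : WithLp 2 (H₁ × H₂) →L[ℂ] H₁ × H₂) ∘L X ∘L
      (e.symm : H₁ × H₂ →L[ℂ] WithLp 2 (H₁ × H₂)) ∘L (inl ℂ H₁ H₂))) :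
    (fun Y : WithLp 2 (H₁ × H₂) →L[ℂ] WithLp 2 (H₁ × H₂) =>
        adjoint A * Y - Y * A)^[m + 2 * p - 2] 1 = 0 := by
  subst he
  obtain rfl : A = blockDiag (A₁, A₂) := hA
  obtain rfl : Ad = blockDiag (A₁', 0) := hAd
  have hcomm : Commute A₁ (topLeftBlock X) := by
    rw [Commute, SemiconjBy, ← topLeftBlock_blockDiag_mul (A₁, A₂), hAX,
      topLeftBlock_mul_blockDiag]
  have hΔ₁ : (sandwichSub (adjoint A₁') A₁)^[m] (topLeftBlock X) = 0 := by
    rw [adjoint_blockDiag, map_zero] at hΔ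
    rw [← topLeftBlock_sandwichSub_iterate (adjoint A₁', 0) (A₁, A₂)]
    exact (congrArg topLeftBlock hΔ).trans (map_zero topLeftBlock)
  have hinv : adjoint A₁ * adjoint A₁' = 1 := by
    simpa [star_eq_adjoint, star_mul] using congrArg star hA₁'
  have h₁ : (genDeriv (adjoint A₁) A₁)^[m + 2 * p - 2] 1 = 0 :=
    genDeriv_iterate_eq_zero_of_le
      (genDeriv_iterate_one_eq_zero_of_denseRange hinv hcomm hdense hΔ₁) (by omega)
  have h₂ : (genDeriv (adjoint A₂) A₂)^[m + 2 * p - 2] 1 = 0 :=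
    genDeriv_iterate_one_eq_zero_of_pow_eq_zero
      (by simpa [star_eq_adjoint, star_pow] using congrArg star hA₂) hA₂ (by omega)
  rw [adjoint_blockDiag]
  show (genDeriv (blockDiag (adjoint A₁, adjoint A₂)) (blockDiag (A₁, A₂)))^[m + 2 * p - 2] 1 = 0
  rw [← map_one blockDiag, ← map_genDeriv_iterate, genDeriv_iterate_prod]
  simp only [Prod.fst_one, Prod.snd_one, h₁, h₂]
  exact map_zero blockDiag

open ContinuousLinearMap in
/-- If `A = A₁ ⊕ A₂` (on the Hilbert direct sum `H₁ ⊕₂ H₂`) is Drazin invertible with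
`A₁` invertible, `A₂` `p`-nilpotent, Drazin inverse `A_d = A₁⁻¹ ⊕ 0`, and if
`Δ_{A_d*,A}^m(X) = 0`, `AX = XA`, and the `(1,1)` entry `X₁₁` of `X` has dense range,
then `A` is `(m+2p-2)`-selfadjoint. -/
theorem stmt_16 {H₁ H₂ : Type*}
    [NormedAddCommGroup H₁] [InnerProductSpace ℂ H₁] [CompleteSpace H₁]
    [NormedAddCommGroup H₂] [InnerProductSpace ℂ H₂] [CompleteSpace H₂]
    (A₁ A₁' : H₁ →L[ℂ] H₁) (A₂ : H₂ →L[ℂ] H₂) (p m : ℕ) (hp : 1 ≤ p) (hm : 1 ≤ m)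
    (hA₁ : A₁ * A₁' = 1) (hA₁' : A₁' * A₁ = 1) (hA₂ : A₂ ^ p = 0)
    (e : WithLp 2 (H₁ × H₂) ≃L[ℂ] H₁ × H₂)
    (he : e = WithLp.prodContinuousLinearEquiv 2 ℂ H₁ H₂)
    (A Ad : WithLp 2 (H₁ × H₂) →L[ℂ] WithLp 2 (H₁ × H₂))
    (hA : A = (e.symm : H₁ × H₂ →L[ℂ] WithLp 2 (H₁ × H₂)) ∘L (A₁.prodMap A₂) ∘L
      (e : WithLp 2 (H₁ × H₂) →L[ℂ] H₁ × H₂))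
    (hAd : Ad = (e.symm : H₁ × H₂ →L[ℂ] WithLp 2 (H₁ × H₂)) ∘L
      (A₁'.prodMap (0 : H₂ →L[ℂ] H₂)) ∘L (e : WithLp 2 (H₁ × H₂) →L[ℂ] H₁ × H₂))
    (X : WithLp 2 (H₁ × H₂) →L[ℂ] WithLp 2 (H₁ × H₂))
    (hΔ : (fun Y : WithLp 2 (H₁ × H₂) →L[ℂ] WithLp 2 (H₁ × H₂) =>
        adjoint Ad * Y * A - Y)^[m] X = 0)
    (hAX : A * X = X * A)
    (hdense : DenseRange ((fst ℂ H₁ H₂) ∘L (e : WithLp 2 (H₁ × H₂) →L[ℂ] H₁ × H₂) ∘L X ∘L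
      (e.symm : H₁ × H₂ →L[ℂ] WithLp 2 (H₁ × H₂)) ∘L (inl ℂ H₁ H₂))) :
    (fun Y : WithLp 2 (H₁ × H₂) →L[ℂ] WithLp 2 (H₁ × H₂) =>
        adjoint A * Y - Y * A)^[m + 2 * p - 2] 1 = 0 :=
  stmt_16_general A₁ A₁' A₂ p m hp hm hA₁' hA₂ e he A Ad hA hAd X hΔ hAX hdense
end

section
/- Let A, B be Drazin invertible bounded operators on a Hilbert space with Δ_{A_d*, A}^m(X) = 0, Δ_{B_d*, B}^n(Y) = 0, and with XY = YX, AB = BA, A*Y = YA*, B*X = XB*, and additionally AB = 0. Then A + B is Drazin invertible and δ_{((A+B)_d)*, A+B}^{m+n-1}(XY) = 0. -/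
section aux

variable {R : Type*} [Ring R]

/-- If `d*d*a = d` then `d = d^(k+1) * a^k` for all `k`. -/
private lemma drz_pow {a d : R} (h2 : d * d * a = d) :
    ∀ k : ℕ, d = d ^ (k + 1) * a ^ k := by
  intro k
  induction k with
  | zero => simp
  | succ k ih =>
    show d = d ^ (k + 2) * a ^ (k + 1)
    have key : d ^ (k + 2) * a ^ (k + 1) = d ^ (k + 1) * a ^ k := by
      calc d ^ (k + 2) * a ^ (k + 1) = (d ^ k * (d * d)) * (a * a ^ k) := by
            rw [pow_add d k 2, pow_two, pow_succ' a k]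
        _ = d ^ k * ((d * d * a) * a ^ k) := by
            rw [mul_assoc (d ^ k) (d * d) (a * a ^ k), ← mul_assoc (d * d) a (a ^ k)]
        _ = d ^ k * (d * a ^ k) := by rw [h2]
        _ = d ^ (k + 1) * a ^ k := by rw [← mul_assoc, ← pow_succ]
    rw [key]; exact ih

/-- Algebraic double-commutant property of the Drazin inverse. -/
private lemma drz_commutant {a d w : R} (h1 : d * a = a * d) (h2 : d * d * a = d)
    (p : ℕ) (hp : a ^ (p + 1) * d = a ^ p) (hw : w * a = a * w) : w * d = d * w := by
  have hda : Commute d a := h1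
  have hwa : Commute w a := hw
  have hd1 : d = d ^ (p + 1) * a ^ p := drz_pow h2 p
  have hd2 : d = a ^ p * d ^ (p + 1) := hd1.trans (hda.pow_pow (p + 1) p).eq
  have hpd : d * a ^ (p + 1) = a ^ p := (hda.pow_right (p + 1)).eq.trans hp
  have key1 : d * w = (d * a) * (w * d) := by
    have h1' : d ^ (p + 1) * (a ^ p * w) = d * w := by rw [← mul_assoc, ← hd1]
    have h2' : d ^ (p + 1) * (a ^ p * w) = d ^ (p + 1) * (w * a ^ p) := by
      rw [(hwa.pow_right p).eq]
    have h3' : d ^ (p + 1) * (w * a ^ p) = d ^ (p + 1) * (w * (a ^ (p + 1) * d)) := by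
      rw [hp]
    have h4' : d ^ (p + 1) * (w * (a ^ (p + 1) * d))
        = d ^ (p + 1) * (a ^ (p + 1) * (w * d)) := by
      rw [← mul_assoc w, (hwa.pow_right (p + 1)).eq, mul_assoc (a ^ (p + 1)) w d]
    have h5' : d ^ (p + 1) * (a ^ (p + 1) * (w * d)) = (d * a) * (w * d) := by
      rw [← mul_assoc]
      congr 1
      rw [pow_succ a p, ← mul_assoc, ← hd1]
    exact h1'.symm.trans (h2'.trans (h3'.trans (h4'.trans h5')))
  have key2 : w * d = (d * a) * (w * d) := by
    have g1 : w * (a ^ p * d ^ (p + 1)) = w * d := by rw [← hd2]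
    have g2 : w * (a ^ p * d ^ (p + 1)) = a ^ p * (w * d ^ (p + 1)) := by
      rw [← mul_assoc, (hwa.pow_right p).eq, mul_assoc]
    have g3 : a ^ p * (w * d ^ (p + 1)) = (d * a ^ (p + 1)) * (w * d ^ (p + 1)) := by
      rw [hpd]
    have g4 : (d * a ^ (p + 1)) * (w * d ^ (p + 1))
        = (d * a) * (w * (a ^ p * d ^ (p + 1))) := by
      rw [pow_succ' a p, ← mul_assoc d a (a ^ p), mul_assoc (d * a) (a ^ p) (w * d ^ (p + 1)),
        ← mul_assoc (a ^ p) w (d ^ (p + 1)), ← (hwa.pow_right p).eq,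
        mul_assoc w (a ^ p) (d ^ (p + 1))]
    have g5 : (d * a) * (w * (a ^ p * d ^ (p + 1))) = (d * a) * (w * d) := by rw [← hd2]
    exact (g1.symm.trans (g2.trans (g3.trans (g4.trans g5))))
  exact key2.trans key1.symm

/-- If `c * s = 0` then `c * Δ^[k] z = (-1)^k * (c*z)` for `Δ z = s*z*t - z`. -/
private lemma kill_iter (s t c : R) (hc : c * s = 0) :
    ∀ (k : ℕ) (z : R), c * ((fun Z => s * Z * t - Z)^[k] z) = (-1 : R) ^ k * (c * z) := by
  intro k
  induction k with
  | zero => intro z; simp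
  | succ k ih =>
    intro z
    rw [Function.iterate_succ_apply, ih]
    have h0 : c * (s * z * t - z) = -(c * z) := by
      rw [mul_sub, mul_assoc s z t, ← mul_assoc c s (z * t), hc, zero_mul, zero_sub]
    rw [h0, pow_succ, mul_assoc, neg_one_mul]

private lemma cancel_neg_one_pow {x : R} {k : ℕ} (h : (-1 : R) ^ k * x = 0) : x = 0 := by
  have h2 : (-1 : R) ^ k * ((-1 : R) ^ k * x) = 0 := by rw [h, mul_zero]
  rwa [← mul_assoc, ← pow_add, Even.neg_one_pow ⟨k, rfl⟩, one_mul] at h2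

end aux

open ContinuousLinearMap in
/-- If `A, B` are Drazin invertible, `Δ_{A_d*,A}^m(X) = 0`, `Δ_{B_d*,B}^n(Y) = 0`,
the commutation hypotheses hold and `AB = 0`, then `A + B` is Drazin invertible and
`δ_{((A+B)_d)*, A+B}^{m+n-1}(XY) = 0`. -/
theorem stmt_17 {H : Type*} [NormedAddCommGroup H] [InnerProductSpace ℂ H] [CompleteSpace H]
    (A B Ad Bd X Y : H →L[ℂ] H) (m n : ℕ) (hm : 1 ≤ m) (hn : 1 ≤ n)
    (hAd : Ad * A = A * Ad) (hAd2 : Ad * Ad * A = Ad)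
    (hAp : ∃ p : ℕ, 1 ≤ p ∧ A ^ (p + 1) * Ad = A ^ p)
    (hBd : Bd * B = B * Bd) (hBd2 : Bd * Bd * B = Bd)
    (hBq : ∃ q : ℕ, 1 ≤ q ∧ B ^ (q + 1) * Bd = B ^ q)
    (hX : (fun Z : H →L[ℂ] H => adjoint Ad * Z * A - Z)^[m] X = 0)
    (hY : (fun Z : H →L[ℂ] H => adjoint Bd * Z * B - Z)^[n] Y = 0)
    (hXY : X * Y = Y * X) (hAB : A * B = B * A)
    (hAY : adjoint A * Y = Y * adjoint A) (hBX : adjoint B * X = X * adjoint B)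
    (hAB0 : A * B = 0) :
    ∃ C : H →L[ℂ] H,
      (C * (A + B) = (A + B) * C ∧ C * C * (A + B) = C ∧
        ∃ r : ℕ, 1 ≤ r ∧ (A + B) ^ (r + 1) * C = (A + B) ^ r) ∧
      (fun Z : H →L[ℂ] H => adjoint C * Z - Z * (A + B))^[m + n - 1] (X * Y) = 0 := by
  obtain ⟨p, hp1, hAp⟩ := hAp
  obtain ⟨q, hq1, hBq⟩ := hBq
  obtain ⟨p, rfl⟩ : ∃ p', p = p' + 1 := ⟨p - 1, by omega⟩
  obtain ⟨q, rfl⟩ : ∃ q', q = q' + 1 := ⟨q - 1, by omega⟩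
  have hBA0 : B * A = 0 := hAB ▸ hAB0
  -- basic annihilation facts
  have zAdB : Ad * B = 0 := by
    rw [← hAd2, mul_assoc, hAB0, mul_zero]
  have zBdA : Bd * A = 0 := by
    rw [← hBd2, mul_assoc, hBA0, mul_zero]
  have hAdpow : Ad = A ^ (p + 1) * Ad ^ (p + 2) :=
    (drz_pow hAd2 (p + 1)).trans ((show Commute Ad A from hAd).pow_pow (p + 2) (p + 1)).eq
  have hBdpow : Bd = B ^ (q + 1) * Bd ^ (q + 2) :=
    (drz_pow hBd2 (q + 1)).trans ((show Commute Bd B from hBd).pow_pow (q + 2) (q + 1)).eq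
  have zBAd : B * Ad = 0 := by
    rw [hAdpow, ← mul_assoc, pow_succ' A p, ← mul_assoc, hBA0, zero_mul, zero_mul]
  have zABd : A * Bd = 0 := by
    rw [hBdpow, ← mul_assoc, pow_succ' B q, ← mul_assoc, hAB0, zero_mul, zero_mul]
  have zAdBd : Ad * Bd = 0 := by
    rw [← hAd2, mul_assoc, zABd, mul_zero]
  have zBdAd : Bd * Ad = 0 := by
    rw [← hBd2, mul_assoc, zBAd, mul_zero]
  -- products with zero cross terms, associated forms
  have zAdB' : Ad * Ad * B = 0 := by rw [mul_assoc, zAdB, mul_zero]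
  have zBdA' : Bd * Bd * A = 0 := by rw [mul_assoc, zBdA, mul_zero]
  -- X * Y = 0
  have hbdad : adjoint Bd * adjoint Ad = 0 := by
    rw [← star_eq_adjoint, ← star_eq_adjoint, ← star_mul, zAdBd, star_zero]
  have hbdX : adjoint Bd * X = 0 := by
    have h := kill_iter (adjoint Ad) A (adjoint Bd) hbdad m X
    rw [hX, mul_zero] at h
    exact cancel_neg_one_pow h.symm
  have hXbd : X * adjoint Bd = 0 := by
    have hcomm : X * adjoint Bd = adjoint Bd * X := by
      refine drz_commutant (a := adjoint B) (d := adjoint Bd) (w := X) ?_ ?_ (q + 1) ?_ ?_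
      · rw [← star_eq_adjoint, ← star_eq_adjoint, ← star_mul, ← star_mul, hBd]
      · have h := congrArg star hBd2
        rw [star_mul, star_mul, star_eq_adjoint, star_eq_adjoint] at h
        have hc : adjoint Bd * adjoint B = adjoint B * adjoint Bd := by
          rw [← star_eq_adjoint, ← star_eq_adjoint, ← star_mul, ← star_mul, hBd]
        rw [mul_assoc, hc, ← mul_assoc, hc, mul_assoc]
        exact h
      · have h := congrArg star hBq
        rw [star_mul, star_pow, star_pow, star_eq_adjoint, star_eq_adjoint] at h
        have hc : Commute (adjoint B) (adjoint Bd) := by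
          rw [Commute, SemiconjBy, ← star_eq_adjoint, ← star_eq_adjoint, ← star_mul, ← star_mul, hBd]
        rw [(hc.pow_left (q + 1 + 1)).eq]
        exact h
      · rw [← star_eq_adjoint] at hBX
        rw [← star_eq_adjoint]
        exact hBX.symm
    rw [hcomm, hbdX]
  have hXY0 : X * Y = 0 := by
    have h := kill_iter (adjoint Bd) B X hXbd n Y
    rw [hY, mul_zero] at h
    exact cancel_neg_one_pow h.symm
  -- powers of the sum
  have zApB : ∀ k : ℕ, A ^ (k + 1) * B = 0 := fun k => by
    rw [pow_succ, mul_assoc, hAB0, mul_zero]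
  have zBpA : ∀ k : ℕ, B ^ (k + 1) * A = 0 := fun k => by
    rw [pow_succ, mul_assoc, hBA0, mul_zero]
  have sum_pow : ∀ k : ℕ, (A + B) ^ (k + 1) = A ^ (k + 1) + B ^ (k + 1) := by
    intro k
    induction k with
    | zero => simp
    | succ k ih =>
      rw [pow_succ, ih, add_mul, mul_add, mul_add, zApB k, zBpA k, add_zero, zero_add,
        ← pow_succ, ← pow_succ]
  refine ⟨Ad + Bd, ⟨?_, ?_, ?_⟩, ?_⟩
  · simp only [add_mul, mul_add, zAdB, zBdA, zBAd, zABd, add_zero, zero_add, hAd, hBd]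
  · simp only [add_mul, mul_add, zAdBd, zBdAd, zAdB', zBdA', hAd2, hBd2, zero_mul,
      mul_zero, add_zero, zero_add]
  · refine ⟨p + q + 2, by omega, ?_⟩
    have e1 : (A + B) ^ (p + q + 2 + 1) = A ^ (p + q + 3) + B ^ (p + q + 3) :=
      sum_pow (p + q + 2)
    have e2 : (A + B) ^ (p + q + 2) = A ^ (p + q + 2) + B ^ (p + q + 2) :=
      sum_pow (p + q + 1)
    have eA : A ^ (p + q + 3) * Ad = A ^ (p + q + 2) := by
      have : A ^ (p + q + 3) = A ^ (q + 1) * A ^ (p + 1 + 1) := by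
        rw [← pow_add]; ring_nf
      rw [this, mul_assoc, hAp, ← pow_add]
      ring_nf
    have eB : B ^ (p + q + 3) * Bd = B ^ (p + q + 2) := by
      have : B ^ (p + q + 3) = B ^ (p + 1) * B ^ (q + 1 + 1) := by
        rw [← pow_add]; ring_nf
      rw [this, mul_assoc, hBq, ← pow_add]
      ring_nf
    have eAB : A ^ (p + q + 3) * Bd = 0 := by
      rw [pow_succ, mul_assoc, zABd, mul_zero]
    have eBA : B ^ (p + q + 3) * Ad = 0 := by
      rw [pow_succ, mul_assoc, zBAd, mul_zero]
    rw [e1, e2, add_mul, mul_add, mul_add, eA, eB, eAB, eBA, add_zero, zero_add]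
  · rw [hXY0]
    exact Function.iterate_fixed (by simp) _
end

section
/- A Drazin invertible bounded operator A on a complex Hilbert space is m-selfadjoint (δ_{A*,A}^m(I) = 0) if and only if both its invertible part A₁ and its nilpotent part A₂ (relative to the decomposition H = A^p(H) ⊕ ker(A^p)) are m-selfadjoint. -/
open ContinuousLinearMap in
/-- A Drazin invertible operator `A = A₁ ⊕ A₂` (on the Hilbert direct sum `H₁ ⊕₂ H₂`,
with `A₁` invertible and `A₂` `p`-nilpotent) is `m`-selfadjoint iff both `A₁` and `A₂`
are `m`-selfadjoint. -/
theorem stmt_19 {H₁ H₂ : Type*}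
    [NormedAddCommGroup H₁] [InnerProductSpace ℂ H₁] [CompleteSpace H₁]
    [NormedAddCommGroup H₂] [InnerProductSpace ℂ H₂] [CompleteSpace H₂]
    (A₁ A₁' : H₁ →L[ℂ] H₁) (A₂ : H₂ →L[ℂ] H₂) (p m : ℕ) (hp : 1 ≤ p) (hm : 1 ≤ m)
    (hA₁ : A₁ * A₁' = 1) (hA₁' : A₁' * A₁ = 1) (hA₂ : A₂ ^ p = 0)
    (e : WithLp 2 (H₁ × H₂) ≃L[ℂ] H₁ × H₂)
    (he : e = WithLp.prodContinuousLinearEquiv 2 ℂ H₁ H₂)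
    (A : WithLp 2 (H₁ × H₂) →L[ℂ] WithLp 2 (H₁ × H₂))
    (hA : A = (e.symm : H₁ × H₂ →L[ℂ] WithLp 2 (H₁ × H₂)) ∘L (A₁.prodMap A₂) ∘L
      (e : WithLp 2 (H₁ × H₂) →L[ℂ] H₁ × H₂)) :
    (fun Y : WithLp 2 (H₁ × H₂) →L[ℂ] WithLp 2 (H₁ × H₂) =>
        adjoint A * Y - Y * A)^[m] 1 = 0 ↔
      ((fun Y : H₁ →L[ℂ] H₁ => adjoint A₁ * Y - Y * A₁)^[m] 1 = 0 ∧
        (fun Y : H₂ →L[ℂ] H₂ => adjoint A₂ * Y - Y * A₂)^[m] 1 = 0) := by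
  -- conjugation map
  set f : (H₁ × H₂ →L[ℂ] H₁ × H₂) → (WithLp 2 (H₁ × H₂) →L[ℂ] WithLp 2 (H₁ × H₂)) :=
    fun T => (e.symm : H₁ × H₂ →L[ℂ] WithLp 2 (H₁ × H₂)) ∘L T ∘L
      (e : WithLp 2 (H₁ × H₂) →L[ℂ] H₁ × H₂) with hf
  have hfmul : ∀ S T, f S * f T = f (S * T) := by
    intro S T
    ext x
    simp [hf, mul_apply]
  have hfone : f 1 = 1 := by
    ext x
    simp [hf]
  have hadj : adjoint A = f ((adjoint A₁).prodMap (adjoint A₂)) := by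
    symm
    rw [ContinuousLinearMap.eq_adjoint_iff]
    intro x y
    subst he hA
    simp [hf, WithLp.prod_inner_apply, ContinuousLinearMap.adjoint_inner_left]
  have hprodsub : ∀ (S₁ T₁ : H₁ →L[ℂ] H₁) (S₂ T₂ : H₂ →L[ℂ] H₂),
      S₁.prodMap S₂ - T₁.prodMap T₂ = (S₁ - T₁).prodMap (S₂ - T₂) := by
    intro S₁ T₁ S₂ T₂; ext x <;> simp
  have hprodmul : ∀ (S₁ T₁ : H₁ →L[ℂ] H₁) (S₂ T₂ : H₂ →L[ℂ] H₂),
      S₁.prodMap S₂ * T₁.prodMap T₂ = (S₁ * T₁).prodMap (S₂ * T₂) := by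
    intro S₁ T₁ S₂ T₂; ext x <;> simp [mul_apply]
  have hfsub : ∀ S T, f S - f T = f (S - T) := by
    intro S T; ext x; simp [hf]
  have key : ∀ n, (fun Y : WithLp 2 (H₁ × H₂) →L[ℂ] WithLp 2 (H₁ × H₂) =>
        adjoint A * Y - Y * A)^[n] 1 =
      f ((((fun Y : H₁ →L[ℂ] H₁ => adjoint A₁ * Y - Y * A₁)^[n] 1)).prodMap
        (((fun Y : H₂ →L[ℂ] H₂ => adjoint A₂ * Y - Y * A₂)^[n] 1))) := by
    intro n
    induction n with
    | zero =>
      simp only [Function.iterate_zero, id_eq]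
      have h11 : (1 : H₁ →L[ℂ] H₁).prodMap (1 : H₂ →L[ℂ] H₂) = 1 := by
        ext x <;> simp
      rw [h11, hfone]
    | succ n ih =>
      rw [Function.iterate_succ_apply', Function.iterate_succ_apply',
        Function.iterate_succ_apply', ih, hadj, hA, hf]
      simp only
      rw [hfmul, hfmul, hfsub, hprodmul, hprodmul, hprodsub]
  have hprodzero : ∀ (S₁ : H₁ →L[ℂ] H₁) (S₂ : H₂ →L[ℂ] H₂),
      S₁.prodMap S₂ = 0 ↔ S₁ = 0 ∧ S₂ = 0 := by
    intro S₁ S₂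
    constructor
    · intro h
      constructor
      · ext x
        have := ContinuousLinearMap.ext_iff.mp h (x, 0)
        simpa using congrArg Prod.fst this
      · ext x
        have := ContinuousLinearMap.ext_iff.mp h (0, x)
        simpa using congrArg Prod.snd this
    · rintro ⟨h1, h2⟩; ext x <;> simp [h1, h2]
  have hfzero : ∀ T, f T = 0 ↔ T = 0 := by
    intro T
    constructor
    · intro h
      refine ContinuousLinearMap.ext fun x => ?_
      have h2 := ContinuousLinearMap.ext_iff.mp h (e.symm x)
      simp only [hf, comp_apply, ContinuousLinearMap.zero_apply,
        ContinuousLinearEquiv.coe_coe, ContinuousLinearEquiv.apply_symm_apply] at h2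
      simpa using congrArg e h2
    · rintro rfl; ext x; simp [hf]
  rw [key m, hfzero, hprodzero]
end
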